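/- arXiv:2411.13442 — 8 statements merged into one kernel-verified Lean document; each statement's English description precedes it below -/
import Mathlib

section
/- Let p, q > 1 be real numbers and let x ∈ (0,1]. Then (p/q) ∫_x^1 (1-u^p)^{1/q-1} u^{p-2} du = x^{p-1} (1-x^p)^{1/q} · ∑_{k=0}^∞ [(1)_k (1+1/q-1/p)_k / ((1+1/q)_k · k!)] (1-x^p)^k. (This is the hypergeometric representation arccos_{p,q}(x) = x^{p-1}(1-x^p)^{1/q} · ₂F₁(1, 1+1/q-1/p; 1+1/q; 1-x^p).) -/
open MeasureTheory

open Topology Filter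

/-- Ascending Pochhammer symbol `(a)_k = a (a+1) ⋯ (a+k-1)`. -/
noncomputable def poch (a : ℝ) (k : ℕ) : ℝ := ∏ i ∈ Finset.range k, (a + i)

lemma poch_zero (a : ℝ) : poch a 0 = 1 := by simp [poch]

lemma poch_succ (a : ℝ) (k : ℕ) : poch a (k + 1) = poch a k * (a + k) := by
  simp [poch, Finset.prod_range_succ]

lemma poch_pos {a : ℝ} (ha : 0 < a) (k : ℕ) : 0 < poch a k := by
  induction k with
  | zero => simp [poch]
  | succ k ih =>
    rw [poch_succ]
    exact mul_pos ih (by positivity)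

lemma poch_one (k : ℕ) : poch 1 k = k.factorial := by
  induction k with
  | zero => simp [poch]
  | succ k ih =>
    rw [poch_succ, ih, Nat.factorial_succ]
    push_cast; ring

/-- coefficient of the hypergeometric series `₂F₁(1, a+b; a+1; z)` -/
noncomputable def cf (a b : ℝ) (k : ℕ) : ℝ := poch (a + b) k / poch (a + 1) k

section series

variable {a b : ℝ} (ha : 0 < a) (hb : 0 < b) (hb1 : b ≤ 1)
include ha hb hb1

lemma cf_nonneg (k : ℕ) : 0 ≤ cf a b k :=
  div_nonneg (poch_pos (by linarith) k).le (poch_pos (by linarith) k).le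

lemma cf_le_one (k : ℕ) : cf a b k ≤ 1 := by
  rw [cf, div_le_one (poch_pos (by linarith) k)]
  refine Finset.prod_le_prod (fun i _ => by positivity) (fun i _ => by linarith)

lemma cf_rec (k : ℕ) : (a + 1 + k) * cf a b (k + 1) = (a + b + k) * cf a b k := by
  have h1 : poch (a + 1) k ≠ 0 := (poch_pos (by linarith) k).ne'
  have h2 : (a + 1 + (k : ℝ)) ≠ 0 := by positivity
  rw [cf, cf, poch_succ, poch_succ]
  field_simp

lemma summable_cf {z : ℝ} (hz : |z| < 1) : Summable (fun k => cf a b k * z ^ k) := by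
  refine Summable.of_norm_bounded (summable_geometric_of_lt_one (abs_nonneg z) hz) (fun k => ?_)
  rw [norm_mul, norm_pow, Real.norm_eq_abs, Real.norm_eq_abs,
    abs_of_nonneg (cf_nonneg ha hb hb1 k)]
  calc cf a b k * |z| ^ k ≤ 1 * |z| ^ k := by
        exact mul_le_mul_of_nonneg_right (cf_le_one ha hb hb1 k) (by positivity)
    _ = |z| ^ k := one_mul _

omit ha hb hb1 in
lemma summable_kr {r : ℝ} (h0 : 0 ≤ r) (h1 : r < 1) :
    Summable (fun k : ℕ => (k : ℝ) * r ^ (k - 1)) := by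
  have h2 : Summable (fun k : ℕ => ((k : ℝ) + 1) * r ^ k) := by
    have ha' : Summable (fun k : ℕ => ((k : ℝ) ^ 1) * r ^ k) :=
      summable_pow_mul_geometric_of_norm_lt_one 1 (by rwa [Real.norm_eq_abs, abs_of_nonneg h0])
    simpa [add_mul, pow_one] using ha'.add (summable_geometric_of_lt_one h0 h1)
  refine (summable_nat_add_iff (f := fun k : ℕ => (k : ℝ) * r ^ (k - 1)) 1).mp ?_
  refine h2.congr (fun n => ?_)
  push_cast
  ring_nf

lemma summable_T {z : ℝ} (hz : |z| < 1) :
    Summable (fun k : ℕ => (k : ℝ) * cf a b k * z ^ (k - 1)) := by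
  refine Summable.of_norm_bounded (summable_kr (abs_nonneg z) hz) (fun k => ?_)
  rw [norm_mul, norm_mul, norm_pow, Real.norm_eq_abs, Real.norm_eq_abs, Real.norm_eq_abs,
    abs_of_nonneg (cf_nonneg ha hb hb1 k), Nat.abs_cast]
  calc (k : ℝ) * cf a b k * |z| ^ (k - 1) ≤ (k : ℝ) * 1 * |z| ^ (k - 1) := by
        refine mul_le_mul_of_nonneg_right
          (mul_le_mul_of_nonneg_left (cf_le_one ha hb hb1 k) (by positivity)) (by positivity)
    _ = (k : ℝ) * |z| ^ (k - 1) := by ring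

end series

section series2

variable {a b : ℝ} (ha : 0 < a) (hb : 0 < b) (hb1 : b ≤ 1)
include ha hb hb1

lemma cf_zero : cf a b 0 = 1 := by simp [cf, poch_zero]

lemma hasDerivAt_S {z : ℝ} (hz : |z| < 1) :
    HasDerivAt (fun y => ∑' k : ℕ, cf a b k * y ^ k)
      (∑' k : ℕ, (k : ℝ) * cf a b k * z ^ (k - 1)) z := by
  set r : ℝ := (1 + |z|) / 2 with hr
  have hr0 : 0 ≤ r := by positivity
  have hr1 : r < 1 := by rw [hr]; linarith
  have hzr : |z| < r := by rw [hr]; linarith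
  refine hasDerivAt_tsum_of_isPreconnected (u := fun k : ℕ => (k : ℝ) * r ^ (k - 1))
    (F := ℝ) (t := Set.Ioo (-r) r)
    (g := fun k y => cf a b k * y ^ k) (g' := fun k y => (k : ℝ) * cf a b k * y ^ (k - 1))
    (y₀ := 0) (summable_kr hr0 hr1) isOpen_Ioo isPreconnected_Ioo
    (fun k y _ => ?_) (fun k y hy => ?_) ?_ ?_ ?_
  · have h := (hasDerivAt_pow k y).const_mul (cf a b k)
    convert h using 1
    · rfl
    ring
  · have hyr : |y| ≤ r := by
      rw [abs_le]; exact ⟨hy.1.le, hy.2.le⟩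
    rw [norm_mul, norm_mul, norm_pow, Real.norm_eq_abs, Real.norm_eq_abs, Real.norm_eq_abs,
      Nat.abs_cast, abs_of_nonneg (cf_nonneg ha hb hb1 k)]
    calc (k : ℝ) * cf a b k * |y| ^ (k - 1) ≤ (k : ℝ) * 1 * r ^ (k - 1) := by
          refine mul_le_mul (mul_le_mul_of_nonneg_left (cf_le_one ha hb hb1 k) (by positivity))
            (pow_le_pow_left₀ (abs_nonneg y) hyr _) (by positivity) (by positivity)
      _ = (k : ℝ) * r ^ (k - 1) := by ring
  · exact Set.mem_Ioo.mpr ⟨by linarith [abs_nonneg z], by linarith [abs_nonneg z]⟩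
  · exact summable_cf ha hb hb1 (by simp : |(0:ℝ)| < 1)
  · exact Set.mem_Ioo.mpr (abs_lt.mp hzr)

lemma cf_key {z : ℝ} (hz0 : 0 ≤ z) (hz1 : z < 1) :
    a * (∑' k : ℕ, cf a b k * z ^ k) - (a + b) * z * (∑' k : ℕ, cf a b k * z ^ k)
      + z * (1 - z) * (∑' k : ℕ, (k : ℝ) * cf a b k * z ^ (k - 1)) = a := by
  have habs : |z| < 1 := by rwa [abs_of_nonneg hz0]
  have hS := (summable_cf ha hb hb1 habs).hasSum
  have hT := (summable_T ha hb hb1 habs).hasSum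
  set S := ∑' k : ℕ, cf a b k * z ^ k with hSdef
  set T := ∑' k : ℕ, (k : ℝ) * cf a b k * z ^ (k - 1) with hTdef
  have hA : HasSum (fun k : ℕ => (a + (k : ℝ)) * cf a b k * z ^ k) (a * S + z * T) := by
    have h := (hS.mul_left a).add (hT.mul_left z)
    have heq : (fun k : ℕ => a * (cf a b k * z ^ k) + z * ((k : ℝ) * cf a b k * z ^ (k - 1)))
        = fun k : ℕ => (a + (k : ℝ)) * cf a b k * z ^ k := by
      funext k
      cases k with
      | zero => simp
      | succ n => push_cast [Nat.add_sub_cancel, pow_succ]; ring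
    rwa [heq] at h
  have hB : HasSum (fun k : ℕ => (a + b + (k : ℝ)) * cf a b k * z ^ (k + 1))
      ((a + b) * z * S + z * z * T) := by
    have h := (hS.mul_left ((a + b) * z)).add (hT.mul_left (z * z))
    have heq : (fun k : ℕ => (a + b) * z * (cf a b k * z ^ k)
          + z * z * ((k : ℝ) * cf a b k * z ^ (k - 1)))
        = fun k : ℕ => (a + b + (k : ℝ)) * cf a b k * z ^ (k + 1) := by
      funext k
      cases k with
      | zero => simp [pow_succ]; ring
      | succ n => push_cast [Nat.add_sub_cancel, pow_succ]; ring
    rwa [heq] at h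
  have hA' : HasSum (fun n : ℕ => (a + ((n : ℝ) + 1)) * cf a b (n + 1) * z ^ (n + 1))
      (a * S + z * T - a) := by
    have h0 : (a * S + z * T - a)
        + ∑ i ∈ Finset.range 1, (a + (i : ℝ)) * cf a b i * z ^ i = a * S + z * T := by
      simp [cf_zero ha hb hb1]
    have h := (hasSum_nat_add_iff
      (f := fun k : ℕ => (a + (k : ℝ)) * cf a b k * z ^ k) 1).mpr (h0 ▸ hA)
    refine h.congr_fun fun n => by push_cast; ring_nf
  have heq3 : (fun n : ℕ => (a + ((n : ℝ) + 1)) * cf a b (n + 1) * z ^ (n + 1))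
      = fun k : ℕ => (a + b + (k : ℝ)) * cf a b k * z ^ (k + 1) := by
    funext n
    rw [show a + ((n : ℝ) + 1) = a + 1 + n by ring, cf_rec ha hb hb1 n]
  rw [heq3] at hA'
  have huniq := hA'.unique hB
  linear_combination huniq

end series2

lemma rpow_shift {t s c : ℝ} (ht : 0 < t) (h : s = c + 1) : t ^ s = t ^ c * t := by
  rw [h, Real.rpow_add ht, Real.rpow_one]

theorem arccos_pq_hypergeometric (p q x : ℝ) (hp : 1 < p) (hq : 1 < q)
    (hx : x ∈ Set.Ioc (0:ℝ) 1) :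
    (p / q) * ∫ u in x..1, (1 - u ^ p) ^ (1 / q - 1) * u ^ (p - 2) =
      x ^ (p - 1) * (1 - x ^ p) ^ (1 / q) *
        ∑' k : ℕ, poch 1 k * poch (1 + 1 / q - 1 / p) k /
          (poch (1 + 1 / q) k * (Nat.factorial k : ℝ)) * (1 - x ^ p) ^ k := by
  obtain ⟨hx0, hx1⟩ := hx
  have hq0 : (0:ℝ) < q := by linarith
  have hp0 : (0:ℝ) < p := by linarith
  have ha : 0 < 1 / q := by positivity
  have hb : 0 < 1 - 1 / p := by
    have : 1 / p < 1 := by rw [div_lt_one hp0]; exact hp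
    linarith
  have hb1 : 1 - 1 / p ≤ 1 := by
    have : 0 < 1 / p := by positivity
    linarith
  have haq : 1 / q < 1 := by rw [div_lt_one hq0]; exact hq
  have hqe : (1:ℝ) / q - 1 ≠ 0 := by linarith
  -- rewrite the series in terms of `cf`
  have hseries : ∀ z : ℝ, (∑' k : ℕ, poch 1 k * poch (1 + 1 / q - 1 / p) k /
      (poch (1 + 1 / q) k * (Nat.factorial k : ℝ)) * z ^ k)
      = ∑' k : ℕ, cf (1 / q) (1 - 1 / p) k * z ^ k := by
    intro z
    refine tsum_congr fun k => ?_
    have h1 : (k.factorial : ℝ) ≠ 0 := Nat.cast_ne_zero.mpr k.factorial_ne_zero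
    rw [poch_one, cf, show (1:ℝ) + 1 / q - 1 / p = 1 / q + (1 - 1 / p) by ring,
      show (1:ℝ) + 1 / q = 1 / q + 1 by ring,
      mul_comm (poch (1 / q + 1) k) ((k.factorial : ℝ)), mul_div_mul_left _ _ h1]
  rw [hseries]
  set g : ℝ → ℝ := fun u => (1 - u ^ p) ^ (1 / q - 1) * u ^ (p - 2) with hgdef
  -- integrability
  have hint : IntervalIntegrable g volume x 1 := by
    set M : ℝ := max (x ^ (p - 2)) 1 with hM
    have hM0 : (0:ℝ) < M := lt_max_of_lt_right one_pos
    have hbase : IntervalIntegrable (fun v : ℝ => v ^ (1 / q - 1)) volume (1 - x) (1 - 1) :=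
      intervalIntegral.intervalIntegrable_rpow' (by linarith)
    have hcomp' : IntervalIntegrable (fun u : ℝ => (1 - u) ^ (1 / q - 1)) volume x 1 := by
      simpa using hbase.comp_sub_left 1
    refine (hcomp'.const_mul M).mono_fun ?_ ?_
    · have hcontg : ContinuousOn g (Set.Ioo x 1) := by
        intro u hu
        have hu0 : 0 < u := lt_trans hx0 hu.1
        have hup : u ^ p < 1 := Real.rpow_lt_one hu0.le hu.2 hp0
        have c1 : ContinuousAt (fun v : ℝ => v ^ p) u :=
          Real.continuousAt_rpow_const u p (Or.inl hu0.ne')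
        have c2 : ContinuousAt (fun v : ℝ => (1 - v ^ p) ^ (1 / q - 1)) u :=
          (continuousAt_const.sub c1).rpow_const
            (Or.inl (ne_of_gt (by nlinarith : (0:ℝ) < 1 - u ^ p)))
        have c3 : ContinuousAt (fun v : ℝ => v ^ (p - 2)) u :=
          Real.continuousAt_rpow_const u _ (Or.inl hu0.ne')
        exact (c2.mul c3).continuousWithinAt
      have m1 : AEStronglyMeasurable g (volume.restrict (Set.Ioo x 1)) :=
        hcontg.aestronglyMeasurable measurableSet_Ioo
      rw [Measure.restrict_congr_set Ioo_ae_eq_Ioc] at m1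
      rwa [Set.uIoc_of_le hx1]
    · rw [Set.uIoc_of_le hx1]
      filter_upwards [ae_restrict_mem measurableSet_Ioc] with u hu
      obtain ⟨hu1, hu2⟩ := hu
      have hu0 : 0 < u := hx0.trans hu1
      have hup1 : u ^ p ≤ 1 := Real.rpow_le_one hu0.le hu2 hp0.le
      have hA : (1 - u ^ p) ^ (1 / q - 1) ≤ (1 - u) ^ (1 / q - 1) := by
        rcases eq_or_lt_of_le hu2 with h | h
        · subst h
          simp [Real.one_rpow]
        · have h1 : 0 < 1 - u := by linarith
          have h2 : 1 - u ≤ 1 - u ^ p := by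
            have hle : u ^ p ≤ u := by
              have := Real.rpow_le_rpow_of_exponent_ge hu0 h.le (le_of_lt hp)
              rwa [Real.rpow_one] at this
            linarith
          exact Real.rpow_le_rpow_of_nonpos h1 h2 (by linarith)
      have hB : u ^ (p - 2) ≤ M := by
        rcases le_total p 2 with h | h
        · exact le_trans (Real.rpow_le_rpow_of_nonpos hx0 hu1.le (by linarith)) (le_max_left _ _)
        · exact le_trans (Real.rpow_le_one hu0.le hu2 (by linarith)) (le_max_right _ _)
      have hA0 : (0:ℝ) ≤ (1 - u) ^ (1 / q - 1) := Real.rpow_nonneg (by linarith) _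
      have hg0 : 0 ≤ g u := mul_nonneg (Real.rpow_nonneg (by linarith) _)
        (Real.rpow_nonneg hu0.le _)
      rw [Real.norm_eq_abs, Real.norm_eq_abs, abs_of_nonneg hg0,
        abs_of_nonneg (by positivity : (0:ℝ) ≤ M * (1 - u) ^ (1 / q - 1))]
      calc g u = (1 - u ^ p) ^ (1 / q - 1) * u ^ (p - 2) := rfl
        _ ≤ (1 - u) ^ (1 / q - 1) * M :=
            mul_le_mul hA hB (Real.rpow_nonneg hu0.le _) hA0
        _ = M * (1 - u) ^ (1 / q - 1) := mul_comm _ _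
  -- continuity of g on (0,1)
  have hgc : ∀ v ∈ Set.Ioo (0:ℝ) 1, ContinuousAt g v := by
    intro v hv
    have hv0 : 0 < v := hv.1
    have hvp : v ^ p < 1 := Real.rpow_lt_one hv0.le hv.2 hp0
    have c1 : ContinuousAt (fun w : ℝ => w ^ p) v :=
      Real.continuousAt_rpow_const v p (Or.inl hv0.ne')
    have c2 : ContinuousAt (fun w : ℝ => (1 - w ^ p) ^ (1 / q - 1)) v :=
      (continuousAt_const.sub c1).rpow_const (Or.inl (ne_of_gt (by linarith : (0:ℝ) < 1 - v ^ p)))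
    have c3 : ContinuousAt (fun w : ℝ => w ^ (p - 2)) v :=
      Real.continuousAt_rpow_const v _ (Or.inl hv0.ne')
    exact c2.mul c3
  rcases eq_or_lt_of_le hx1 with hxe | hxlt
  · -- x = 1 : both sides vanish
    subst hxe
    simp [Real.one_rpow, Real.zero_rpow (ne_of_gt ha)]
    exact Or.inl (Real.zero_rpow (inv_ne_zero hq0.ne'))
  · set I : ℝ := ∫ u in x..1, g u with hIdef
    set H : ℝ → ℝ := fun t => p / q * (I - ∫ u in x..t, g u)
      - t ^ (p - 1) * ((1 - t ^ p) ^ (1 / q)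
          * ∑' k : ℕ, cf (1 / q) (1 - 1 / p) k * (1 - t ^ p) ^ k) with hHdef
    have hHcont : ContinuousOn H (Set.Icc x 1) := by
      have hprim : ContinuousOn (fun t => ∫ u in x..t, g u) (Set.Icc x 1) := by
        have h := intervalIntegral.continuousOn_primitive_interval' hint Set.left_mem_uIcc
        rwa [Set.uIcc_of_le hx1] at h
      refine ContinuousOn.sub (continuousOn_const.mul (continuousOn_const.sub hprim)) ?_
      intro t ht
      have ht0 : 0 < t := lt_of_lt_of_le hx0 ht.1
      have htp1 : t ^ p ≤ 1 := Real.rpow_le_one ht0.le ht.2 hp0.le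
      have htp0 : 0 < t ^ p := Real.rpow_pos_of_pos ht0 p
      have hz1 : |1 - t ^ p| < 1 := by
        rw [abs_of_nonneg (by linarith)]; linarith
      have cphi : ContinuousAt (fun v : ℝ => 1 - v ^ p) t :=
        continuousAt_const.sub (Real.continuousAt_rpow_const t p (Or.inl ht0.ne'))
      have c1 : ContinuousAt (fun v : ℝ => v ^ (p - 1)) t :=
        Real.continuousAt_rpow_const t _ (Or.inl ht0.ne')
      have c2 : ContinuousAt (fun v : ℝ => (1 - v ^ p) ^ (1 / q)) t :=
        cphi.rpow_const (Or.inr ha.le)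
      have c3 : ContinuousAt
          (fun v : ℝ => ∑' k : ℕ, cf (1 / q) (1 - 1 / p) k * (1 - v ^ p) ^ k) t := by
        have hs := (hasDerivAt_S ha hb hb1 hz1).continuousAt
        have h := ContinuousAt.comp (f := fun v : ℝ => 1 - v ^ p) hs cphi
        simpa [Function.comp_def] using h
      exact (c1.mul (c2.mul c3)).continuousWithinAt
    have hHderiv : ∀ y ∈ Set.Ico x 1, HasDerivWithinAt H 0 (Set.Ici y) y := by
      intro y hy
      have hy0 : 0 < y := lt_of_lt_of_le hx0 hy.1
      have hy1 : y < 1 := hy.2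
      have hyp1 : y ^ p < 1 := Real.rpow_lt_one hy0.le hy1 hp0
      have hyp0 : 0 < y ^ p := Real.rpow_pos_of_pos hy0 p
      have hzy0 : 0 < 1 - y ^ p := by linarith
      have hzy1 : 1 - y ^ p < 1 := by linarith
      have hintxy : IntervalIntegrable g volume x y := by
        refine hint.mono_set ?_
        rw [Set.uIcc_of_le hy.1, Set.uIcc_of_le hx1]
        exact Set.Icc_subset_Icc le_rfl hy1.le
      have hmeasg : StronglyMeasurableAtFilter g (𝓝 y) volume :=
        ContinuousAt.stronglyMeasurableAtFilter isOpen_Ioo hgc y ⟨hy0, hy1⟩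
      have hFTC : HasDerivAt (fun t => ∫ u in x..t, g u) (g y) y :=
        intervalIntegral.integral_hasDerivAt_right hintxy hmeasg (hgc y ⟨hy0, hy1⟩)
      have hphi : HasDerivAt (fun t : ℝ => 1 - t ^ p) (-(p * y ^ (p - 1))) y := by
        simpa [Pi.sub_def] using (hasDerivAt_const y (1:ℝ)).sub
          (Real.hasDerivAt_rpow_const (p := p) (Or.inl hy0.ne'))
      have h1 : HasDerivAt (fun t : ℝ => t ^ (p - 1)) ((p - 1) * y ^ (p - 1 - 1)) y :=
        Real.hasDerivAt_rpow_const (Or.inl hy0.ne')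
      have h2 : HasDerivAt (fun t : ℝ => (1 - t ^ p) ^ (1 / q))
          (-(p * y ^ (p - 1)) * (1 / q) * (1 - y ^ p) ^ (1 / q - 1)) y :=
        hphi.rpow_const (Or.inl hzy0.ne')
      have h3 : HasDerivAt
          (fun t : ℝ => ∑' k : ℕ, cf (1 / q) (1 - 1 / p) k * (1 - t ^ p) ^ k)
          ((∑' k : ℕ, (k : ℝ) * cf (1 / q) (1 - 1 / p) k * (1 - y ^ p) ^ (k - 1))
            * -(p * y ^ (p - 1))) y := by
        have hs := hasDerivAt_S ha hb hb1
          (show |1 - y ^ p| < 1 by rw [abs_of_pos hzy0]; exact hzy1)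
        have h := HasDerivAt.comp (h := fun t : ℝ => 1 - t ^ p) y hs hphi
        simpa [Function.comp_def] using h
      have hGd := h1.mul (h2.mul h3)
      have hH' := ((hFTC.const_sub I).const_mul (p / q)).sub hGd
      have key := cf_key ha hb hb1 (le_of_lt hzy0) hzy1
      have hbp : p * (1 - 1 / p) = p - 1 := by field_simp
      have hfinal : HasDerivAt H 0 y := by
        convert hH' using 1
        · rfl
        · rfl
        · rfl
        simp only [Pi.mul_apply]
        have hgy : g y = (1 - y ^ p) ^ (1 / q - 1) * y ^ (p - 2) := rfl
        rw [hgy, show p - 1 - 1 = p - 2 by ring,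
          rpow_shift hy0 (show p - 1 = (p - 2) + 1 by ring),
          rpow_shift hzy0 (show (1:ℝ) / q = (1 / q - 1) + 1 by ring)]
        have e6 : y ^ (p - 2) * y * y = y ^ p := by
          rw [rpow_shift hy0 (show p = (p - 1) + 1 by ring),
            rpow_shift hy0 (show p - 1 = (p - 2) + 1 by ring)]
        linear_combination
          (-(p * y ^ (p - 2) * (1 - y ^ p) ^ (1 / q - 1))) * key
          + (-(y ^ (p - 2) * (1 - y ^ p) ^ (1 / q - 1) *
              ((p / q) * (∑' k : ℕ, cf (1 / q) (1 - 1 / p) k * (1 - y ^ p) ^ k)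
                + p * (1 - y ^ p) *
                  (∑' k : ℕ, (k : ℝ) * cf (1 / q) (1 - 1 / p) k * (1 - y ^ p) ^ (k - 1))))) * e6
          + (-((1 - y ^ p) * (∑' k : ℕ, cf (1 / q) (1 - 1 / p) k * (1 - y ^ p) ^ k)
              * y ^ (p - 2) * (1 - y ^ p) ^ (1 / q - 1))) * hbp
      exact hfinal.hasDerivWithinAt
    have hconst := constant_of_has_deriv_right_zero hHcont hHderiv 1 ⟨hx1, le_rfl⟩
    have hcx := hconst.symm
    rw [hHdef] at hcx
    simp only [intervalIntegral.integral_same, Real.one_rpow, sub_self,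
      Real.zero_rpow (ne_of_gt ha), mul_zero, zero_mul, sub_zero, mul_one, one_mul] at hcx
    linear_combination hcx
end

section
/- Fix q > 1 and y > 0. If 1 < p₁ < p₂ and x₁, x₂ ∈ (0,1) satisfy ∫_0^{x₁} (1-t^q)^{-1/p₁} dt = y and ∫_0^{x₂} (1-t^q)^{-1/p₂} dt = y, then x₁ < x₂. In other words, the function p ↦ sin_{p,q}(y) is increasing on (1,∞). -/
/-! Since `0 < 1 - t ^ q < 1` on `(0, 1)`, the integrand `(1 - t ^ q) ^ (-1 / p)` decreases
strictly in `p`, while the integral is nondecreasing in its upper limit. So `x₂ ≤ x₁` would give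
`y < ∫₀^{x₂} (1 - t ^ q) ^ (-1 / p₁) ≤ y`. -/

open MeasureTheory Set

section OneSubRpow

variable {q : ℝ}

lemma one_sub_rpow_pos (hq : 0 < q) {t : ℝ} (ht₀ : 0 ≤ t) (ht₁ : t < 1) : 0 < 1 - t ^ q :=
  sub_pos.mpr (Real.rpow_lt_one ht₀ ht₁ hq)

lemma continuousOn_one_sub_rpow_rpow (hq : 0 < q) (r : ℝ) {x : ℝ} (hx : x < 1) :
    ContinuousOn (fun t : ℝ => (1 - t ^ q) ^ r) (Icc 0 x) := by
  have hbase : ContinuousOn (fun t : ℝ => 1 - t ^ q) (Icc 0 x) :=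
    continuousOn_const.sub (continuousOn_id.rpow_const fun _ _ => Or.inr hq.le)
  exact hbase.rpow_const fun t ht => Or.inl (one_sub_rpow_pos hq ht.1 (ht.2.trans_lt hx)).ne'

lemma integral_one_sub_rpow_rpow_lt_of_lt (hq : 0 < q) {r s x : ℝ} (hrs : r < s)
    (hx : x ∈ Ioo (0 : ℝ) 1) :
    ∫ t in (0 : ℝ)..x, (1 - t ^ q) ^ s < ∫ t in (0 : ℝ)..x, (1 - t ^ q) ^ r := by
  have hpointwise : ∀ t ∈ Ioc 0 x, (1 - t ^ q) ^ s < (1 - t ^ q) ^ r := fun t ht =>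
    Real.rpow_lt_rpow_of_exponent_gt (one_sub_rpow_pos hq ht.1.le (ht.2.trans_lt hx.2))
      (sub_lt_self 1 (Real.rpow_pos_of_pos ht.1 q)) hrs
  exact intervalIntegral.integral_lt_integral_of_continuousOn_of_le_of_exists_lt hx.1
    (continuousOn_one_sub_rpow_rpow hq s hx.2) (continuousOn_one_sub_rpow_rpow hq r hx.2)
    (fun t ht => (hpointwise t ht).le) ⟨x, right_mem_Icc.mpr hx.1.le, hpointwise x ⟨hx.1, le_rfl⟩⟩

lemma integral_one_sub_rpow_rpow_mono_upper (hq : 0 < q) (r : ℝ) {a b : ℝ} (ha : 0 ≤ a)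
    (hab : a ≤ b) (hb : b < 1) :
    ∫ t in (0 : ℝ)..a, (1 - t ^ q) ^ r ≤ ∫ t in (0 : ℝ)..b, (1 - t ^ q) ^ r := by
  refine intervalIntegral.integral_mono_interval le_rfl ha hab ?_
    ((continuousOn_one_sub_rpow_rpow hq r hb).intervalIntegrable_of_Icc (ha.trans hab))
  filter_upwards [ae_restrict_mem measurableSet_Ioc] with t ht
  exact Real.rpow_nonneg (one_sub_rpow_pos hq ht.1.le (ht.2.trans_lt hb)).le r

end OneSubRpow

theorem sin_pq_increasing_in_p_general (q y : ℝ) (hq : 1 < q)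
    (p₁ p₂ x₁ x₂ : ℝ) (hp₁ : 1 < p₁) (hp : p₁ < p₂)
    (hx₁ : x₁ ∈ Set.Ioo (0:ℝ) 1) (hx₂ : x₂ ∈ Set.Ioo (0:ℝ) 1)
    (h₁ : (∫ t in (0:ℝ)..x₁, (1 - t ^ q) ^ (-(1 / p₁))) = y)
    (h₂ : (∫ t in (0:ℝ)..x₂, (1 - t ^ q) ^ (-(1 / p₂))) = y) :
    x₁ < x₂ := by
  by_contra! hx
  have hq₀ : 0 < q := zero_lt_one.trans hq
  have hexp : -(1 / p₁) < -(1 / p₂) :=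
    neg_lt_neg (one_div_lt_one_div_of_lt (zero_lt_one.trans hp₁) hp)
  have := calc
    y = ∫ t in (0 : ℝ)..x₂, (1 - t ^ q) ^ (-(1 / p₂)) := h₂.symm
    _ < ∫ t in (0 : ℝ)..x₂, (1 - t ^ q) ^ (-(1 / p₁)) :=
      integral_one_sub_rpow_rpow_lt_of_lt hq₀ hexp hx₂
    _ ≤ ∫ t in (0 : ℝ)..x₁, (1 - t ^ q) ^ (-(1 / p₁)) :=
      integral_one_sub_rpow_rpow_mono_upper hq₀ _ hx₂.1.le hx hx₁.2
    _ = y := h₁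
  exact lt_irrefl y this

theorem sin_pq_increasing_in_p (q y : ℝ) (hq : 1 < q) (hy : 0 < y)
    (p₁ p₂ x₁ x₂ : ℝ) (hp₁ : 1 < p₁) (hp : p₁ < p₂)
    (hx₁ : x₁ ∈ Set.Ioo (0:ℝ) 1) (hx₂ : x₂ ∈ Set.Ioo (0:ℝ) 1)
    (h₁ : (∫ t in (0:ℝ)..x₁, (1 - t ^ q) ^ (-(1 / p₁))) = y)
    (h₂ : (∫ t in (0:ℝ)..x₂, (1 - t ^ q) ^ (-(1 / p₂))) = y) :
    x₁ < x₂ :=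
  sin_pq_increasing_in_p_general q y hq p₁ p₂ x₁ x₂ hp₁ hp hx₁ hx₂ h₁ h₂
end

section
/- Fix q > 1 and y > 0. If 1 < p₁ < p₂ and x₁, x₂ ∈ (0,∞) satisfy ∫_0^{x₁} (1+t^q)^{-1/p₁} dt = y and ∫_0^{x₂} (1+t^q)^{-1/p₂} dt = y, then x₂ < x₁. In other words, the function p ↦ sinh_{p,q}(y) is decreasing on (1,∞). -/
/-!
For `t > 0` the integrand `(1 + t^q)^(-1/p)` increases strictly with `p`, so
`arcsinh_{p₁,q} x₁ < arcsinh_{p₂,q} x₁`; since `arcsinh_{p₂,q}` is monotone, `x₁ ≤ x₂` would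
force `y < y`.
-/

open MeasureTheory Set

noncomputable def arcsinhPQ (p q x : ℝ) : ℝ :=
  ∫ t in (0:ℝ)..x, (1 + t ^ q) ^ (-(1 / p))

lemma continuousOn_arcsinhPQ_integrand (p : ℝ) {q : ℝ} (hq : 0 < q) :
    ContinuousOn (fun t : ℝ => (1 + t ^ q) ^ (-(1 / p))) (Ici 0) := by
  refine (continuousOn_const.add (Real.continuous_rpow_const hq.le).continuousOn).rpow_const
    fun t ht => Or.inl ?_
  simp only [Pi.add_apply]
  linarith [Real.rpow_nonneg (mem_Ici.1 ht) q]

lemma arcsinhPQ_integrand_lt {p₁ p₂ q t : ℝ} (hp₁ : 0 < p₁) (hp : p₁ < p₂) (ht : 0 < t) :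
    (1 + t ^ q) ^ (-(1 / p₁)) < (1 + t ^ q) ^ (-(1 / p₂)) := by
  have hbase : 1 < 1 + t ^ q := by linarith [Real.rpow_pos_of_pos ht q]
  have hexp : 1 / p₂ < 1 / p₁ := one_div_lt_one_div_of_lt hp₁ hp
  exact Real.rpow_lt_rpow_of_exponent_lt hbase (by linarith)

lemma arcsinhPQ_mono (p : ℝ) {q x₁ x₂ : ℝ} (hq : 0 < q) (hx₁ : 0 ≤ x₁) (hx : x₁ ≤ x₂) :
    arcsinhPQ p q x₁ ≤ arcsinhPQ p q x₂ := by
  refine intervalIntegral.integral_mono_interval le_rfl hx₁ hx ?_ ?_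
  · refine ae_restrict_of_forall_mem measurableSet_Ioc fun t ht => ?_
    have : 0 ≤ t := ht.1.le
    positivity
  · exact ((continuousOn_arcsinhPQ_integrand p hq).mono
      fun t ht => le_min le_rfl (hx₁.trans hx) |>.trans ht.1).intervalIntegrable

lemma arcsinhPQ_lt_of_lt {p₁ p₂ q x : ℝ} (hq : 0 < q) (hp₁ : 0 < p₁) (hp : p₁ < p₂) (hx : 0 < x) :
    arcsinhPQ p₁ q x < arcsinhPQ p₂ q x :=
  intervalIntegral.integral_lt_integral_of_continuousOn_of_le_of_exists_lt hx
    ((continuousOn_arcsinhPQ_integrand p₁ hq).mono Icc_subset_Ici_self)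
    ((continuousOn_arcsinhPQ_integrand p₂ hq).mono Icc_subset_Ici_self)
    (fun _ ht => (arcsinhPQ_integrand_lt hp₁ hp ht.1).le)
    ⟨x, right_mem_Icc.2 hx.le, arcsinhPQ_integrand_lt hp₁ hp hx⟩

theorem sinh_pq_decreasing_in_p_general (q y : ℝ) (hq : 1 < q)
    (p₁ p₂ x₁ x₂ : ℝ) (hp₁ : 1 < p₁) (hp : p₁ < p₂)
    (hx₁ : x₁ ∈ Set.Ioi (0:ℝ))
    (h₁ : (∫ t in (0:ℝ)..x₁, (1 + t ^ q) ^ (-(1 / p₁))) = y)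
    (h₂ : (∫ t in (0:ℝ)..x₂, (1 + t ^ q) ^ (-(1 / p₂))) = y) :
    x₂ < x₁ := by
  by_contra! hx
  have hq₀ : 0 < q := by linarith
  have key : arcsinhPQ p₁ q x₁ < arcsinhPQ p₂ q x₂ :=
    (arcsinhPQ_lt_of_lt hq₀ (by linarith) hp hx₁).trans_le (arcsinhPQ_mono p₂ hq₀ hx₁.le hx)
  rw [arcsinhPQ, arcsinhPQ, h₁, h₂] at key
  exact lt_irrefl y key

theorem sinh_pq_decreasing_in_p (q y : ℝ) (hq : 1 < q) (hy : 0 < y)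
    (p₁ p₂ x₁ x₂ : ℝ) (hp₁ : 1 < p₁) (hp : p₁ < p₂)
    (hx₁ : x₁ ∈ Set.Ioi (0:ℝ)) (hx₂ : x₂ ∈ Set.Ioi (0:ℝ))
    (h₁ : (∫ t in (0:ℝ)..x₁, (1 + t ^ q) ^ (-(1 / p₁))) = y)
    (h₂ : (∫ t in (0:ℝ)..x₂, (1 + t ^ q) ^ (-(1 / p₂))) = y) :
    x₂ < x₁ :=
  sinh_pq_decreasing_in_p_general q y hq p₁ p₂ x₁ x₂ hp₁ hp hx₁ h₁ h₂
end

section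
/- Fix q > 1 and y > 0. If 1 < p₁ < p₂ and x₁, x₂ ∈ (1,∞) satisfy (p₁/q) ∫_1^{x₁} (u^{p₁}-1)^{1/q-1} u^{p₁-2} du = y and (p₂/q) ∫_1^{x₂} (u^{p₂}-1)^{1/q-1} u^{p₂-2} du = y, then x₂ < x₁. In other words, the function p ↦ cosh_{p,q}(y) is decreasing on (1,∞). -/
open MeasureTheory

private lemma cosh_aux_cont {p q x : ℝ} (hp : 1 < p) (hq : 1 < q) (hx : 1 < x) :
    ContinuousOn (fun u : ℝ => (u ^ p - 1) ^ (1 / q) / u ^ 2) (Set.Icc 1 x) := by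
  have hq0 : (0:ℝ) ≤ 1 / q := by positivity
  apply ContinuousOn.div
  · apply ContinuousOn.rpow_const
    · exact (continuousOn_id.rpow_const fun u hu => Or.inr (by linarith)).sub continuousOn_const
    · exact fun u hu => Or.inr hq0
  · fun_prop
  · intro u hu
    have : (1:ℝ) ≤ u := hu.1
    positivity

private lemma cosh_aux_integrable {p q x : ℝ} (hp : 1 < p) (hq : 1 < q) (hx : 1 < x) :
    IntervalIntegrable (fun u => (u ^ p - 1) ^ (1 / q - 1) * u ^ (p - 2)) volume 1 x := by
  have hq0 : 0 < 1 / q := by positivity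
  have hq1 : 1 / q < 1 := by
    rw [div_lt_one (by linarith)]; linarith
  have hc : (-1:ℝ) < 1 / q - 1 := by linarith
  have hg : IntervalIntegrable (fun u : ℝ => x ^ p * (u - 1) ^ (1 / q - 1)) volume 1 x := by
    have h0 : IntervalIntegrable (fun u : ℝ => u ^ (1 / q - 1)) volume 0 (x - 1) :=
      intervalIntegral.intervalIntegrable_rpow' hc
    have h1 := h0.comp_sub_right 1
    simp only [zero_add, sub_add_cancel] at h1
    exact h1.const_mul _
  refine hg.mono_fun' ?_ ?_
  · apply ContinuousOn.aestronglyMeasurable _ measurableSet_uIoc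
    rw [Set.uIoc_of_le hx.le]
    apply ContinuousOn.mul
    · apply ContinuousOn.rpow_const
      · exact (continuousOn_id.rpow_const fun u hu => Or.inr (by linarith)).sub continuousOn_const
      · intro u hu
        have hu1 : 1 < u := hu.1
        have : 1 < u ^ p := by
          calc (1:ℝ) = u ^ (0:ℝ) := (Real.rpow_zero u).symm
          _ < u ^ p := Real.rpow_lt_rpow_of_exponent_lt hu1 (by linarith)
        exact Or.inl (by linarith)
    · exact continuousOn_id.rpow_const fun u hu => Or.inl (by rintro rfl; exact absurd hu.1 (by norm_num))
  · rw [Set.uIoc_of_le hx.le]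
    rw [Filter.EventuallyLE, ae_restrict_iff' measurableSet_Ioc]
    refine ae_of_all _ fun u hu => ?_
    have hu1 : 1 < u := hu.1
    have hux : u ≤ x := hu.2
    have hupos : (0:ℝ) < u := by linarith
    have hup : u ≤ u ^ p := by
      calc u = u ^ (1:ℝ) := (Real.rpow_one u).symm
      _ ≤ u ^ p := Real.rpow_le_rpow_of_exponent_le hu1.le hp.le
    have h1 : 0 < u ^ p - 1 := by linarith
    have hfac1 : (u ^ p - 1) ^ (1 / q - 1) ≤ (u - 1) ^ (1 / q - 1) :=
      Real.rpow_le_rpow_of_nonpos (by linarith) (by linarith) (by linarith)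
    have hfac2 : u ^ (p - 2) ≤ x ^ p := by
      calc u ^ (p - 2) ≤ u ^ p := Real.rpow_le_rpow_of_exponent_le hu1.le (by linarith)
      _ ≤ x ^ p := Real.rpow_le_rpow hupos.le hux (by linarith)
    have hnn : 0 ≤ (u ^ p - 1) ^ (1 / q - 1) * u ^ (p - 2) :=
      mul_nonneg (Real.rpow_nonneg h1.le _) (Real.rpow_nonneg hupos.le _)
    rw [Real.norm_eq_abs, abs_of_nonneg hnn]
    calc (u ^ p - 1) ^ (1 / q - 1) * u ^ (p - 2)
        ≤ (u - 1) ^ (1 / q - 1) * x ^ p :=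
          mul_le_mul hfac1 hfac2 (Real.rpow_nonneg hupos.le _) (Real.rpow_nonneg (by linarith) _)
      _ = x ^ p * (u - 1) ^ (1 / q - 1) := mul_comm _ _

private lemma cosh_aux_rewrite {p q x : ℝ} (hp : 1 < p) (hq : 1 < q) (hx : 1 < x) :
    (p / q) * (∫ u in (1:ℝ)..x, (u ^ p - 1) ^ (1 / q - 1) * u ^ (p - 2))
      = (x ^ p - 1) ^ (1 / q) / x + ∫ u in (1:ℝ)..x, (u ^ p - 1) ^ (1 / q) / u ^ 2 := by
  have hq0 : 0 < 1 / q := by positivity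
  set G : ℝ → ℝ := fun u => (u ^ p - 1) ^ (1 / q) / u with hG
  set f' : ℝ → ℝ := fun u =>
      (p / q) * ((u ^ p - 1) ^ (1 / q - 1) * u ^ (p - 2)) - (u ^ p - 1) ^ (1 / q) / u ^ 2 with hf'
  have hint1 := cosh_aux_integrable hp hq hx
  have hint2 : IntervalIntegrable (fun u : ℝ => (u ^ p - 1) ^ (1 / q) / u ^ 2) volume 1 x := by
    apply ContinuousOn.intervalIntegrable
    rw [Set.uIcc_of_le hx.le]
    exact cosh_aux_cont hp hq hx
  have hint : IntervalIntegrable f' volume 1 x := (hint1.const_mul _).sub hint2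
  have hcont : ContinuousOn G (Set.Icc 1 x) := by
    apply ContinuousOn.div
    · apply ContinuousOn.rpow_const
      · exact (continuousOn_id.rpow_const fun u hu => Or.inr (by linarith)).sub continuousOn_const
      · exact fun u hu => Or.inr hq0.le
    · exact continuousOn_id
    · intro u hu; have : (1:ℝ) ≤ u := hu.1; positivity
  have hderiv : ∀ u ∈ Set.Ioo (1:ℝ) x, HasDerivAt G (f' u) u := by
    intro u hu
    have hu1 : 1 < u := hu.1
    have hupos : (0:ℝ) < u := by linarith
    have hup : u ≤ u ^ p := by
      calc u = u ^ (1:ℝ) := (Real.rpow_one u).symm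
      _ ≤ u ^ p := Real.rpow_le_rpow_of_exponent_le hu1.le hp.le
    have h1 : 0 < u ^ p - 1 := by linarith
    have d1 : HasDerivAt (fun u : ℝ => u ^ p) (p * u ^ (p - 1)) u :=
      Real.hasDerivAt_rpow_const (Or.inl (ne_of_gt hupos))
    have d2 : HasDerivAt (fun u : ℝ => u ^ p - 1) (p * u ^ (p - 1)) u := d1.sub_const 1
    have d3 : HasDerivAt (fun u : ℝ => (u ^ p - 1) ^ (1 / q))
        (p * u ^ (p - 1) * (1 / q) * (u ^ p - 1) ^ (1 / q - 1)) u :=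
      d2.rpow_const (Or.inl (ne_of_gt h1))
    have d4 := d3.div (hasDerivAt_id u) (ne_of_gt hupos)
    convert d4 using 1
    · rfl
    · rfl
    · rfl
    have e1 : u ^ (p - 1) * u = u ^ p := by
      rw [← Real.rpow_add_one (ne_of_gt hupos)]; ring_nf
    have e2 : u ^ (p - 2) * u ^ (2:ℕ) = u ^ p := by
      rw [show (u:ℝ) ^ (2:ℕ) = u ^ (2:ℝ) by rw [← Real.rpow_natCast]; norm_num,
        ← Real.rpow_add hupos]
      ring_nf
    have hu2 : (u:ℝ) ^ (2:ℕ) ≠ 0 := by positivity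
    have hqne : (q:ℝ) ≠ 0 := by linarith
    simp only [hf', id_eq, mul_one]
    have e3 : u * u⁻¹ = 1 := mul_inv_cancel₀ (ne_of_gt hupos)
    linear_combination (p / q * (u ^ p - 1) ^ (1 / q - 1) / u ^ (2:ℕ)) * (e2 - e1)
      + (-(p / q * (u ^ p - 1) ^ (1 / q - 1) * u ^ (p - 2)) * (u * u⁻¹ + 1)) * e3
  have hftc := intervalIntegral.integral_eq_sub_of_hasDerivAt_of_le hx.le hcont hderiv hint
  have hsplit : ∫ u in (1:ℝ)..x, f' u
      = (p / q) * (∫ u in (1:ℝ)..x, (u ^ p - 1) ^ (1 / q - 1) * u ^ (p - 2))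
        - ∫ u in (1:ℝ)..x, (u ^ p - 1) ^ (1 / q) / u ^ 2 := by
    rw [hf']
    rw [intervalIntegral.integral_sub (hint1.const_mul _) hint2,
      intervalIntegral.integral_const_mul]
  have hG1 : G 1 = 0 := by
    have : ((0:ℝ)) ^ ((1:ℝ)/q) = 0 := Real.zero_rpow (ne_of_gt hq0)
    simp [hG, Real.one_rpow, one_div] at this ⊢
    simpa using this
  have hGx : G x = (x ^ p - 1) ^ (1 / q) / x := rfl
  rw [hsplit, hG1, hGx] at hftc
  linarith

theorem cosh_pq_decreasing_in_p (q y : ℝ) (hq : 1 < q) (hy : 0 < y)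
    (p₁ p₂ x₁ x₂ : ℝ) (hp₁ : 1 < p₁) (hp : p₁ < p₂)
    (hx₁ : x₁ ∈ Set.Ioi (1:ℝ)) (hx₂ : x₂ ∈ Set.Ioi (1:ℝ))
    (h₁ : (p₁ / q) * (∫ u in (1:ℝ)..x₁, (u ^ p₁ - 1) ^ (1 / q - 1) * u ^ (p₁ - 2)) = y)
    (h₂ : (p₂ / q) * (∫ u in (1:ℝ)..x₂, (u ^ p₂ - 1) ^ (1 / q - 1) * u ^ (p₂ - 2)) = y) :
    x₂ < x₁ := by
  have hx₁' : 1 < x₁ := hx₁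
  have hx₂' : 1 < x₂ := hx₂
  have hp₂ : 1 < p₂ := hp₁.trans hp
  have hq0 : 0 < 1 / q := by positivity
  by_contra hcon
  push_neg at hcon
  -- strict monotonicity in p at x = x₁
  have hmono_p : (p₁ / q) * (∫ u in (1:ℝ)..x₁, (u ^ p₁ - 1) ^ (1 / q - 1) * u ^ (p₁ - 2))
      < (p₂ / q) * (∫ u in (1:ℝ)..x₁, (u ^ p₂ - 1) ^ (1 / q - 1) * u ^ (p₂ - 2)) := by
    rw [cosh_aux_rewrite hp₁ hq hx₁', cosh_aux_rewrite hp₂ hq hx₁']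
    have hxp : x₁ ^ p₁ < x₁ ^ p₂ := Real.rpow_lt_rpow_of_exponent_lt hx₁' hp
    have hxp1 : (1:ℝ) < x₁ ^ p₁ := by
      calc (1:ℝ) = x₁ ^ (0:ℝ) := (Real.rpow_zero x₁).symm
      _ < x₁ ^ p₁ := Real.rpow_lt_rpow_of_exponent_lt hx₁' (by linarith)
    have hb : (x₁ ^ p₁ - 1) ^ (1 / q) / x₁ < (x₁ ^ p₂ - 1) ^ (1 / q) / x₁ := by
      have hnum : (x₁ ^ p₁ - 1) ^ (1 / q) < (x₁ ^ p₂ - 1) ^ (1 / q) :=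
        Real.rpow_lt_rpow (by linarith) (by linarith) hq0
      exact (div_lt_div_iff_of_pos_right (by linarith)).mpr hnum
    have hintle : (∫ u in (1:ℝ)..x₁, (u ^ p₁ - 1) ^ (1 / q) / u ^ 2)
        ≤ ∫ u in (1:ℝ)..x₁, (u ^ p₂ - 1) ^ (1 / q) / u ^ 2 := by
      apply intervalIntegral.integral_mono_on hx₁'.le
      · exact ContinuousOn.intervalIntegrable
          (by rw [Set.uIcc_of_le hx₁'.le]; exact cosh_aux_cont hp₁ hq hx₁')
      · exact ContinuousOn.intervalIntegrable
          (by rw [Set.uIcc_of_le hx₁'.le]; exact cosh_aux_cont hp₂ hq hx₁')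
      · intro u hu
        have hu1 : (1:ℝ) ≤ u := hu.1
        have hupow : u ^ p₁ ≤ u ^ p₂ := Real.rpow_le_rpow_of_exponent_le hu1 hp.le
        have h1 : (1:ℝ) ≤ u ^ p₁ := by
          calc (1:ℝ) = u ^ (0:ℝ) := (Real.rpow_zero u).symm
          _ ≤ u ^ p₁ := Real.rpow_le_rpow_of_exponent_le hu1 (by linarith)
        have hu2 : (0:ℝ) < u ^ (2:ℕ) := by positivity
        have hnum : (u ^ p₁ - 1) ^ (1 / q) ≤ (u ^ p₂ - 1) ^ (1 / q) :=
          Real.rpow_le_rpow (by linarith) (by linarith) hq0.le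
        gcongr <;> linarith [hnum]
    linarith
  -- monotonicity in x for p₂
  have hmono_x : (p₂ / q) * (∫ u in (1:ℝ)..x₁, (u ^ p₂ - 1) ^ (1 / q - 1) * u ^ (p₂ - 2))
      ≤ (p₂ / q) * (∫ u in (1:ℝ)..x₂, (u ^ p₂ - 1) ^ (1 / q - 1) * u ^ (p₂ - 2)) := by
    apply mul_le_mul_of_nonneg_left ?_ (by positivity)
    apply intervalIntegral.integral_mono_interval le_rfl hx₁'.le hcon ?_
      (cosh_aux_integrable hp₂ hq hx₂')
    rw [Filter.EventuallyLE, ae_restrict_iff' measurableSet_Ioc]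
    refine ae_of_all _ fun u hu => ?_
    have hu1 : 1 < u := hu.1
    have h1 : (1:ℝ) ≤ u ^ p₂ := by
      calc (1:ℝ) = u ^ (0:ℝ) := (Real.rpow_zero u).symm
      _ ≤ u ^ p₂ := Real.rpow_le_rpow_of_exponent_le hu1.le (by linarith)
    exact mul_nonneg (Real.rpow_nonneg (by linarith) _) (Real.rpow_nonneg (by linarith) _)
  rw [h₁] at hmono_p
  rw [h₂] at hmono_x
  linarith
end

section
/- Fix p > 1 and y > 0. If 1 < q₁ < q₂ and x₁, x₂ ∈ (0,1) satisfy ∫_0^{x₁} (1-t^{q₁})^{-(1+1/q₁-1/p)} dt = y and ∫_0^{x₂} (1-t^{q₂})^{-(1+1/q₂-1/p)} dt = y, then x₁ < x₂. In other words, the function q ↦ tamh_{p,q}(y) is increasing on (1,∞). -/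
/-!
Write `a(q) = 1 + 1/q - 1/p`. For `0 < t < 1` and `q₁ < q₂` the base `1 - t^q₁` is smaller than
`1 - t^q₂`, both lie in `(0, 1)`, and `a(q₁) > a(q₂) ≥ 0`; hence the integrand for `q₁` strictly
dominates the one for `q₂`, and so do their primitives. Since the primitive for `q₁` is strictly
increasing, equal values `y` force `x₁ < x₂`.
-/

open MeasureTheory Set

namespace Tamh

noncomputable def integrand (p q t : ℝ) : ℝ := (1 - t ^ q) ^ (-(1 + 1 / q - 1 / p))

noncomputable def arctamh (p q x : ℝ) : ℝ := ∫ t in (0 : ℝ)..x, integrand p q t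

variable {p q : ℝ}

lemma one_sub_rpow_pos {t : ℝ} (hq : 0 < q) (ht : t ∈ Ico 0 1) : 0 < 1 - t ^ q :=
  sub_pos.mpr (Real.rpow_lt_one ht.1 ht.2 hq)

lemma integrand_pos {t : ℝ} (hq : 0 < q) (ht : t ∈ Ico 0 1) : 0 < integrand p q t :=
  Real.rpow_pos_of_pos (one_sub_rpow_pos hq ht) _

lemma continuousOn_integrand (hq : 0 < q) : ContinuousOn (integrand p q) (Ico 0 1) := by
  refine ContinuousOn.rpow_const ?_ fun t ht => Or.inl (one_sub_rpow_pos hq ht).ne'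
  exact continuousOn_const.sub (continuousOn_id.rpow_const fun _ _ => Or.inr hq.le)

lemma intervalIntegrable_integrand (hq : 0 < q) {a b : ℝ} (ha : a ∈ Ico 0 1) (hb : b ∈ Ico 0 1) :
    IntervalIntegrable (integrand p q) volume a b :=
  ((continuousOn_integrand hq).mono (ordConnected_Ico.uIcc_subset ha hb)).intervalIntegrable

lemma arctamh_strictMonoOn (hq : 0 < q) : StrictMonoOn (arctamh p q) (Ico 0 1) := by
  intro a ha b hb hab
  have h0 : (0 : ℝ) ∈ Ico 0 1 := ⟨le_rfl, one_pos⟩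
  have hdiff : arctamh p q b - arctamh p q a = ∫ t in a..b, integrand p q t :=
    intervalIntegral.integral_interval_sub_left (intervalIntegrable_integrand hq h0 hb)
      (intervalIntegrable_integrand hq h0 ha)
  have hpos : 0 < ∫ t in a..b, integrand p q t :=
    intervalIntegral.intervalIntegral_pos_of_pos_on (intervalIntegrable_integrand hq ha hb)
      (fun t ht => integrand_pos hq ⟨ha.1.trans ht.1.le, ht.2.trans hb.2⟩) hab
  linarith

lemma rpow_neg_lt_rpow_neg {b₁ b₂ a₁ a₂ : ℝ} (hb₁ : 0 < b₁) (hb₁_lt : b₁ < 1) (hb : b₁ ≤ b₂)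
    (ha₂ : 0 ≤ a₂) (ha : a₂ < a₁) : b₂ ^ (-a₂) < b₁ ^ (-a₁) :=
  calc b₂ ^ (-a₂) ≤ b₁ ^ (-a₂) := Real.rpow_le_rpow_of_nonpos hb₁ hb (neg_nonpos.mpr ha₂)
    _ < b₁ ^ (-a₁) := Real.rpow_lt_rpow_of_exponent_gt hb₁ hb₁_lt (neg_lt_neg ha)

lemma integrand_lt_of_lt {q₁ q₂ t : ℝ} (hp : 1 ≤ p) (hq₁ : 0 < q₁) (hq : q₁ < q₂)
    (ht : t ∈ Ioo 0 1) : integrand p q₂ t < integrand p q₁ t := by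
  have hq₂ : 0 < q₂ := hq₁.trans hq
  have hpow : t ^ q₂ < t ^ q₁ := Real.rpow_lt_rpow_of_exponent_gt ht.1 ht.2 hq
  have hp_inv : 1 / p ≤ 1 := (div_le_one (by linarith)).mpr hp
  have hq_inv : 1 / q₂ < 1 / q₁ := one_div_lt_one_div_of_lt hq₁ hq
  have hq₂_inv : 0 < 1 / q₂ := one_div_pos.mpr hq₂
  refine rpow_neg_lt_rpow_neg (one_sub_rpow_pos hq₁ ⟨ht.1.le, ht.2⟩) ?_ (by linarith)
    (by linarith) (by linarith)
  linarith [Real.rpow_pos_of_pos ht.1 q₁]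

lemma arctamh_lt_of_lt {q₁ q₂ x : ℝ} (hp : 1 ≤ p) (hq₁ : 0 < q₁) (hq : q₁ < q₂)
    (hx : x ∈ Ioo 0 1) : arctamh p q₂ x < arctamh p q₁ x := by
  have h0 : (0 : ℝ) ∈ Ico 0 1 := ⟨le_rfl, one_pos⟩
  have hx' : x ∈ Ico 0 1 := ⟨hx.1.le, hx.2⟩
  rw [← sub_pos, arctamh, arctamh, ← intervalIntegral.integral_sub
    (intervalIntegrable_integrand hq₁ h0 hx') (intervalIntegrable_integrand (hq₁.trans hq) h0 hx')]
  refine intervalIntegral.intervalIntegral_pos_of_pos_on ?_ (fun t ht => ?_) hx.1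
  · exact (intervalIntegrable_integrand hq₁ h0 hx').sub
      (intervalIntegrable_integrand (hq₁.trans hq) h0 hx')
  · exact sub_pos.mpr (integrand_lt_of_lt hp hq₁ hq ⟨ht.1, ht.2.trans hx.2⟩)

end Tamh

theorem tamh_pq_increasing_in_q_general (p y : ℝ) (hp : 1 < p)
    (q₁ q₂ x₁ x₂ : ℝ) (hq₁ : 1 < q₁) (hq : q₁ < q₂)
    (hx₁ : x₁ ∈ Set.Ioo (0:ℝ) 1) (hx₂ : x₂ ∈ Set.Ioo (0:ℝ) 1)
    (h₁ : (∫ t in (0:ℝ)..x₁, (1 - t ^ q₁) ^ (-(1 + 1 / q₁ - 1 / p))) = y)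
    (h₂ : (∫ t in (0:ℝ)..x₂, (1 - t ^ q₂) ^ (-(1 + 1 / q₂ - 1 / p))) = y) :
    x₁ < x₂ := by
  have hq₁0 : 0 < q₁ := one_pos.trans hq₁
  have h₁' : Tamh.arctamh p q₁ x₁ = y := h₁
  have h₂' : Tamh.arctamh p q₂ x₂ = y := h₂
  have hlt : Tamh.arctamh p q₁ x₁ < Tamh.arctamh p q₁ x₂ := by
    rw [h₁', ← h₂']
    exact Tamh.arctamh_lt_of_lt hp.le hq₁0 hq hx₂
  exact (Tamh.arctamh_strictMonoOn hq₁0).lt_iff_lt ⟨hx₁.1.le, hx₁.2⟩ ⟨hx₂.1.le, hx₂.2⟩ |>.mp hlt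

theorem tamh_pq_increasing_in_q (p y : ℝ) (hp : 1 < p) (hy : 0 < y)
    (q₁ q₂ x₁ x₂ : ℝ) (hq₁ : 1 < q₁) (hq : q₁ < q₂)
    (hx₁ : x₁ ∈ Set.Ioo (0:ℝ) 1) (hx₂ : x₂ ∈ Set.Ioo (0:ℝ) 1)
    (h₁ : (∫ t in (0:ℝ)..x₁, (1 - t ^ q₁) ^ (-(1 + 1 / q₁ - 1 / p))) = y)
    (h₂ : (∫ t in (0:ℝ)..x₂, (1 - t ^ q₂) ^ (-(1 + 1 / q₂ - 1 / p))) = y) :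
    x₁ < x₂ :=
  tamh_pq_increasing_in_q_general p y hp q₁ q₂ x₁ x₂ hq₁ hq hx₁ hx₂ h₁ h₂
end

section
/- Fix q > 1 and y > 0, and let g : ℝ → ℝ satisfy g(p) ∈ (0,∞) and ∫_0^{g(p)} (1+t^q)^{-1/p} dt = y for every p > 1. Then the function p ↦ log g(p) is convex on the interval (1,∞). In other words, for each fixed y and q > 1 the function p ↦ sinh_{p,q}(y) is logarithmically convex on (1,∞). -/
open MeasureTheory

section Aux
open Real Set MeasureTheory intervalIntegral


noncomputable def fpq (q p t : ℝ) : ℝ := (1 + t ^ q) ^ (-(1 / p))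

lemma base_pos {q t : ℝ} (ht : 0 ≤ t) : (0:ℝ) < 1 + t ^ q := by
  have := Real.rpow_nonneg ht q
  linarith

lemma fpq_pos {q p t : ℝ} (ht : 0 ≤ t) : 0 < fpq q p t :=
  Real.rpow_pos_of_pos (base_pos ht) _

lemma fpq_contAt {q : ℝ} (hq : 0 ≤ q) (p : ℝ) {t : ℝ} (ht : 0 ≤ t) :
    ContinuousAt (fpq q p) t := by
  have h1 : ContinuousAt (fun t : ℝ => 1 + t ^ q) t :=
    continuousAt_const.add (Real.continuousAt_rpow_const t q (Or.inr hq))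
  exact h1.rpow_const (Or.inl (base_pos ht).ne')

lemma fpq_contOn {q : ℝ} (hq : 0 ≤ q) (p : ℝ) : ContinuousOn (fpq q p) (Ici 0) :=
  fun _ ht => (fpq_contAt hq p ht).continuousWithinAt

lemma fpq_intble {q : ℝ} (hq : 0 ≤ q) (p : ℝ) {x₁ x₂ : ℝ} (h1 : 0 ≤ x₁) (h2 : 0 ≤ x₂) :
    IntervalIntegrable (fpq q p) volume x₁ x₂ := by
  apply ((fpq_contOn hq p).mono _).intervalIntegrable
  rw [uIcc_eq_union]
  rintro t (ht | ht) <;> [exact h1.trans ht.1; exact h2.trans ht.1]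

noncomputable def Phi (q p x : ℝ) : ℝ := ∫ t in (0:ℝ)..x, fpq q p t

lemma Phi_zero (q p : ℝ) : Phi q p 0 = 0 := intervalIntegral.integral_same

lemma Phi_strictMonoOn {q : ℝ} (hq : 0 ≤ q) (p : ℝ) : StrictMonoOn (Phi q p) (Ici 0) := by
  intro x₁ h1 x₂ h2 h12
  have key : Phi q p x₂ - Phi q p x₁ = ∫ t in x₁..x₂, fpq q p t := by
    rw [Phi, Phi, ← intervalIntegral.integral_interval_sub_left
      (fpq_intble hq p le_rfl h2) (fpq_intble hq p le_rfl h1)]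
  have hpos : 0 < ∫ t in x₁..x₂, fpq q p t := by
    apply intervalIntegral.intervalIntegral_pos_of_pos_on (fpq_intble hq p h1 (h1.trans h12.le))
      (fun t ht => fpq_pos (le_trans h1 ht.1.le)) h12
  linarith

lemma Phi_monoOn {q : ℝ} (hq : 0 ≤ q) (p : ℝ) : MonotoneOn (Phi q p) (Ici 0) :=
  (Phi_strictMonoOn hq p).monotoneOn

lemma Phi_contOn {q : ℝ} (hq : 0 ≤ q) (p : ℝ) {c : ℝ} (hc : 0 ≤ c) : ContinuousOn (Phi q p) (Icc 0 c) := by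
  have : IntegrableOn (fpq q p) (uIcc 0 c) volume := by
    rw [uIcc_of_le hc]
    exact ((fpq_contOn hq p).mono Icc_subset_Ici_self).integrableOn_compact isCompact_Icc
  have h2 := intervalIntegral.continuousOn_primitive_interval (a := (0:ℝ)) (b := c) this
  rw [uIcc_of_le hc] at h2
  exact h2

lemma Phi_hasDerivAt {q : ℝ} (hq : 0 ≤ q) (p : ℝ) {x : ℝ} (hx : 0 < x) :
    HasDerivAt (Phi q p) (fpq q p x) x := by
  apply intervalIntegral.integral_hasDerivAt_right (fpq_intble hq p le_rfl hx.le)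
  · exact ContinuousOn.stronglyMeasurableAtFilter isOpen_Ioi
      ((fpq_contOn hq p).mono Ioi_subset_Ici_self) x hx
  · exact fpq_contAt hq p hx.le

/-- inverse construction -/
lemma exists_inverse {q : ℝ} (hq : 0 ≤ q) (p : ℝ) {c y : ℝ} (hc : 0 < c) (hy : 0 < y)
    (hΦ : Phi q p c = y) :
    ∃ T : ℝ → ℝ, Continuous T ∧ T 0 = 0 ∧ T y = c ∧
      ∀ s ∈ Icc 0 y, T s ∈ Icc 0 c ∧ Phi q p (T s) = s := by
  have hmaps : ∀ x : Icc (0:ℝ) c, Phi q p x ∈ Icc 0 y := by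
    rintro ⟨x, hx0, hxc⟩
    constructor
    · simpa [Phi_zero] using Phi_monoOn hq p (self_mem_Ici) (by exact hx0) hx0
    · simpa [hΦ] using Phi_monoOn hq p (show (x:ℝ) ∈ Ici 0 from hx0) hc.le hxc
  set φ : Icc (0:ℝ) c → Icc (0:ℝ) y := fun x => ⟨Phi q p x, hmaps x⟩ with hφdef
  have hφcont : Continuous φ := by
    apply Continuous.subtype_mk
    exact ((Phi_contOn hq p hc.le).comp_continuous continuous_subtype_val (fun x => x.2))
  have hφinj : Function.Injective φ := by
    rintro ⟨x1, hx1⟩ ⟨x2, hx2⟩ h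
    have : Phi q p x1 = Phi q p x2 := congrArg Subtype.val h
    exact Subtype.ext ((Phi_strictMonoOn hq p).injOn (Icc_subset_Ici_self hx1)
      (Icc_subset_Ici_self hx2) this)
  have hφsurj : Function.Surjective φ := by
    rintro ⟨s, hs⟩
    have : s ∈ Icc (Phi q p 0) (Phi q p c) := by rwa [Phi_zero, hΦ]
    obtain ⟨x, hx, hxs⟩ := intermediate_value_Icc hc.le
      ((Phi_contOn hq p hc.le)) this
    exact ⟨⟨x, hx⟩, Subtype.ext hxs⟩
  set e : Icc (0:ℝ) c ≃ Icc (0:ℝ) y := Equiv.ofBijective φ ⟨hφinj, hφsurj⟩ with hedef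
  have he : Continuous e := hφcont
  let homeo := Continuous.homeoOfEquivCompactToT2 (f := e) he
  set T : ℝ → ℝ := fun s => (homeo.symm (projIcc 0 y hy.le s) : ℝ) with hTdef
  have hTcont : Continuous T :=
    continuous_subtype_val.comp (homeo.continuous_symm.comp (continuous_projIcc))
  have hprop : ∀ s ∈ Icc 0 y, T s ∈ Icc 0 c ∧ Phi q p (T s) = s := by
    intro s hs
    refine ⟨(homeo.symm (projIcc 0 y hy.le s)).2, ?_⟩
    have h1 : homeo (homeo.symm (projIcc 0 y hy.le s)) = projIcc 0 y hy.le s :=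
      homeo.apply_symm_apply _
    have h2 : (homeo (homeo.symm (projIcc 0 y hy.le s)) : ℝ)
        = Phi q p (T s) := rfl
    rw [h1] at h2
    rw [← h2, projIcc_of_mem hy.le hs]
  have hT0 : T 0 = 0 := by
    have h := hprop 0 (left_mem_Icc.mpr hy.le)
    have := (Phi_strictMonoOn hq p).injOn (Icc_subset_Ici_self h.1) self_mem_Ici
      (by rw [h.2, Phi_zero])
    exact this
  have hTy : T y = c := by
    have h := hprop y (right_mem_Icc.mpr hy.le)
    exact (Phi_strictMonoOn hq p).injOn (Icc_subset_Ici_self h.1) hc.le (by rw [h.2, hΦ])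
  exact ⟨T, hTcont, hT0, hTy, hprop⟩

lemma holder2 {l X Z : ℝ} (hl0 : 0 < l) (hl1 : l < 1) (hX : 0 ≤ X) (hZ : 0 ≤ Z) :
    1 + X ^ l * Z ^ (1 - l) ≤ (1 + X) ^ l * (1 + Z) ^ (1 - l) := by
  have hD1 : (0:ℝ) < 1 + X := by linarith
  have hD2 : (0:ℝ) < 1 + Z := by linarith
  have hl1' : (0:ℝ) ≤ 1 - l := by linarith
  have h1 : (1/(1+X)) ^ l * (1/(1+Z)) ^ (1-l) ≤ l * (1/(1+X)) + (1-l) * (1/(1+Z)) :=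
    Real.geom_mean_le_arith_mean2_weighted hl0.le hl1' (by positivity) (by positivity) (by ring)
  have h2 : (X/(1+X)) ^ l * (Z/(1+Z)) ^ (1-l) ≤ l * (X/(1+X)) + (1-l) * (Z/(1+Z)) :=
    Real.geom_mean_le_arith_mean2_weighted hl0.le hl1' (by positivity) (by positivity) (by ring)
  have e1 : (1/(1+X)) ^ l * (1/(1+Z)) ^ (1-l) = 1 / ((1+X)^l * (1+Z)^(1-l)) := by
    rw [Real.div_rpow zero_le_one hD1.le, Real.div_rpow zero_le_one hD2.le,
      Real.one_rpow, Real.one_rpow]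
    field_simp
  have e2 : (X/(1+X)) ^ l * (Z/(1+Z)) ^ (1-l) = (X^l * Z^(1-l)) / ((1+X)^l * (1+Z)^(1-l)) := by
    rw [Real.div_rpow hX hD1.le, Real.div_rpow hZ hD2.le]
    field_simp
  have hsum : l * (1/(1+X)) + (1-l) * (1/(1+Z)) + (l * (X/(1+X)) + (1-l) * (Z/(1+Z))) = 1 := by
    field_simp
    ring
  have hden : (0:ℝ) < (1+X)^l * (1+Z)^(1-l) := by positivity
  have : (1 + X^l * Z^(1-l)) / ((1+X)^l * (1+Z)^(1-l)) ≤ 1 := by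
    rw [add_div, ← e1, ← e2]
    linarith
  calc 1 + X^l*Z^(1-l) = ((1 + X^l*Z^(1-l)) / ((1+X)^l * (1+Z)^(1-l))) * ((1+X)^l * (1+Z)^(1-l)) := by
        field_simp
    _ ≤ 1 * ((1+X)^l * (1+Z)^(1-l)) := by
        apply mul_le_mul_of_nonneg_right this hden.le
    _ = (1+X)^l * (1+Z)^(1-l) := one_mul _

lemma expo_ineq {a b l A B : ℝ} (ha : 1 < a) (hab : a ≤ b) (hl0 : 0 < l) (hl1 : l < 1)
    (hB : 0 ≤ B) (hBA : B ≤ A) :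
    (l * A + (1 - l) * B) / (l * a + (1 - l) * b) ≤ l * A / a + (1 - l) * B / b := by
  have hP : 0 < l * a + (1 - l) * b := by nlinarith
  have hA : 0 ≤ A := le_trans hB hBA
  have h1 : (l * A + (1 - l) * B) / (l * a + (1 - l) * b)
      ≤ (l * (A * b) + (1 - l) * (B * a)) / (a * b) := by
    rw [div_le_div_iff₀ hP (by nlinarith)]
    nlinarith [mul_nonneg (mul_nonneg (mul_nonneg hl0.le (by linarith : (0:ℝ) ≤ 1 - l))
      (by linarith : (0:ℝ) ≤ b - a)) (by nlinarith : (0:ℝ) ≤ A * b - B * a)]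
  have ha0 : a ≠ 0 := by positivity
  have hb0 : b ≠ 0 := by nlinarith
  have h2 : (l * (A * b) + (1 - l) * (B * a)) / (a * b) = l * A / a + (1 - l) * B / b := by
    field_simp
  linarith

lemma pointwise {q a b l x z : ℝ} (hq : 0 < q) (ha : 1 < a) (hab : a ≤ b)
    (hl0 : 0 < l) (hl1 : l < 1) (hz : 0 < z) (hzx : z ≤ x) :
    (1 + (x ^ l * z ^ (1 - l)) ^ q) ^ (1 / (l * a + (1 - l) * b))
      ≤ x ^ l * z ^ (1 - l) *
        (l * ((1 + x ^ q) ^ (1/a) / x) + (1 - l) * ((1 + z ^ q) ^ (1/b) / z)) := by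
  have hx : 0 < x := lt_of_lt_of_le hz hzx
  have hb : 1 < b := lt_of_lt_of_le ha hab
  have hP : 0 < l * a + (1 - l) * b := by nlinarith
  have hl1' : (0:ℝ) ≤ 1 - l := by linarith
  set X := x ^ q with hXdef
  set Z := z ^ q with hZdef
  have hXpos : 0 < X := Real.rpow_pos_of_pos hx q
  have hZpos : 0 < Z := Real.rpow_pos_of_pos hz q
  have hZX : Z ≤ X := Real.rpow_le_rpow hz.le hzx hq.le
  set u := (1 + X) ^ (1/a) with hudef
  set v := (1 + Z) ^ (1/b) with hvdef
  have h1X : (0:ℝ) < 1 + X := by linarith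
  have h1Z : (0:ℝ) < 1 + Z := by linarith
  have hu : 0 < u := Real.rpow_pos_of_pos h1X _
  have hv : 0 < v := Real.rpow_pos_of_pos h1Z _
  -- step A: AM-GM
  have stepA : (u/x) ^ l * (v/z) ^ (1-l) ≤ l * (u/x) + (1-l) * (v/z) :=
    Real.geom_mean_le_arith_mean2_weighted hl0.le hl1' (by positivity) (by positivity) (by ring)
  -- step B
  have stepB : x ^ l * z ^ (1-l) * ((u/x) ^ l * (v/z) ^ (1-l)) = u ^ l * v ^ (1-l) := by
    rw [Real.div_rpow hu.le hx.le, Real.div_rpow hv.le hz.le]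
    have hxl : (0:ℝ) < x ^ l := Real.rpow_pos_of_pos hx _
    have hzl : (0:ℝ) < z ^ (1-l) := Real.rpow_pos_of_pos hz _
    field_simp
  -- step D: rewrite inner power
  have stepD : (x ^ l * z ^ (1 - l)) ^ q = X ^ l * Z ^ (1-l) := by
    rw [Real.mul_rpow (by positivity) (by positivity), ← Real.rpow_mul hx.le,
      ← Real.rpow_mul hz.le, mul_comm l q, mul_comm (1-l) q, Real.rpow_mul hx.le,
      Real.rpow_mul hz.le]
  -- step C: Hölder
  have stepC : 1 + (x ^ l * z ^ (1 - l)) ^ q ≤ (1+X) ^ l * (1+Z) ^ (1-l) := by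
    rw [stepD]; exact holder2 hl0 hl1 hXpos.le hZpos.le
  -- step E
  have stepE : ((1+X) ^ l * (1+Z) ^ (1-l)) ^ (1 / (l * a + (1 - l) * b)) ≤ u ^ l * v ^ (1-l) := by
    set A := Real.log (1+X) with hAdef
    set B := Real.log (1+Z) with hBdef
    have hB0 : 0 ≤ B := Real.log_nonneg (by linarith)
    have hBA : B ≤ A := Real.log_le_log h1Z (by linarith)
    have e1 : ((1+X) ^ l * (1+Z) ^ (1-l)) ^ (1 / (l * a + (1 - l) * b))
        = Real.exp ((l * A + (1-l) * B) / (l * a + (1 - l) * b)) := by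
      rw [Real.rpow_def_of_pos (by positivity), Real.log_mul (by positivity) (by positivity),
        Real.log_rpow h1X, Real.log_rpow h1Z]
      rw [hAdef, hBdef]
      ring_nf
    have e2 : u ^ l * v ^ (1-l) = Real.exp (l * A / a + (1-l) * B / b) := by
      rw [hudef, hvdef, ← Real.rpow_mul h1X.le, ← Real.rpow_mul h1Z.le,
        Real.rpow_def_of_pos h1X, Real.rpow_def_of_pos h1Z, ← Real.exp_add]
      rw [hAdef, hBdef]
      ring_nf
    rw [e1, e2]
    exact Real.exp_le_exp.mpr (expo_ineq ha hab hl0 hl1 hB0 hBA)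
  -- combine
  have c1 : (1 + (x ^ l * z ^ (1 - l)) ^ q) ^ (1 / (l * a + (1 - l) * b))
      ≤ ((1+X) ^ l * (1+Z) ^ (1-l)) ^ (1 / (l * a + (1 - l) * b)) := by
    apply Real.rpow_le_rpow (by positivity) stepC (by positivity)
  have c2 : u ^ l * v ^ (1-l) ≤ x ^ l * z ^ (1-l) *
      (l * (u/x) + (1-l) * (v/z)) := by
    calc u ^ l * v ^ (1-l) = x ^ l * z ^ (1-l) * ((u/x) ^ l * (v/z) ^ (1-l)) := stepB.symm
      _ ≤ x ^ l * z ^ (1-l) * (l * (u/x) + (1-l) * (v/z)) := by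
          apply mul_le_mul_of_nonneg_left stepA (by positivity)
  calc (1 + (x ^ l * z ^ (1 - l)) ^ q) ^ (1 / (l * a + (1 - l) * b))
      ≤ ((1+X) ^ l * (1+Z) ^ (1-l)) ^ (1 / (l * a + (1 - l) * b)) := c1
    _ ≤ u ^ l * v ^ (1-l) := stepE
    _ ≤ x ^ l * z ^ (1-l) * (l * (u/x) + (1-l) * (v/z)) := c2

lemma Phi_le_Phi {q : ℝ} (hq : 0 ≤ q) {a b : ℝ} (ha : 0 < a) (hab : a ≤ b) {x : ℝ}
    (hx : 0 ≤ x) : Phi q a x ≤ Phi q b x := by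
  apply intervalIntegral.integral_mono_on hx (fpq_intble hq a le_rfl hx)
    (fpq_intble hq b le_rfl hx)
  intro t ht
  apply Real.rpow_le_rpow_of_exponent_le
  · have := Real.rpow_nonneg ht.1 q; linarith
  · have : 1/b ≤ 1/a := one_div_le_one_div_of_le ha hab
    linarith

lemma key (q y : ℝ) (hq : 1 < q) (hy : 0 < y) (g : ℝ → ℝ)
    (hg : ∀ p : ℝ, 1 < p → 0 < g p ∧ Phi q p (g p) = y)
    {a b l : ℝ} (ha : 1 < a) (hab : a ≤ b) (hl0 : 0 < l) (hl1 : l < 1) :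
    g (l * a + (1 - l) * b) ≤ g a ^ l * g b ^ (1 - l) := by
  have hq0 : (0:ℝ) ≤ q := by linarith
  have hb : 1 < b := lt_of_lt_of_le ha hab
  set p := l * a + (1 - l) * b with hpdef
  have hp : 1 < p := by nlinarith
  obtain ⟨hga, hΦa⟩ := hg a ha
  obtain ⟨hgb, hΦb⟩ := hg b hb
  obtain ⟨hgp, hΦp⟩ := hg p hp
  obtain ⟨Ta, hTacont, hTa0, hTay, hTa⟩ := exists_inverse hq0 a hga hy hΦa
  obtain ⟨Tb, hTbcont, hTb0, hTby, hTb⟩ := exists_inverse hq0 b hgb hy hΦb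
  -- positivity of Ta, Tb on (0,y]
  have hTapos : ∀ s ∈ Ioo (0:ℝ) y, 0 < Ta s := by
    intro s hs
    have h := hTa s ⟨hs.1.le, hs.2.le⟩
    refine lt_of_le_of_ne h.1.1 fun e => ?_
    rw [← e, Phi_zero] at h
    exact absurd h.2.symm (ne_of_gt hs.1)
  have hTbpos : ∀ s ∈ Ioo (0:ℝ) y, 0 < Tb s := by
    intro s hs
    have h := hTb s ⟨hs.1.le, hs.2.le⟩
    refine lt_of_le_of_ne h.1.1 fun e => ?_
    rw [← e, Phi_zero] at h
    exact absurd h.2.symm (ne_of_gt hs.1)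
  -- Tb ≤ Ta
  have hTbTa : ∀ s ∈ Icc (0:ℝ) y, Tb s ≤ Ta s := by
    intro s hs
    have hA := hTa s hs
    have hB := hTb s hs
    by_contra hlt
    push_neg at hlt
    have h1 : Phi q a (Ta s) < Phi q a (Tb s) :=
      Phi_strictMonoOn hq0 a hA.1.1 (hA.1.1.trans hlt.le) hlt
    have h2 : Phi q a (Tb s) ≤ Phi q b (Tb s) :=
      Phi_le_Phi hq0 (by linarith) hab hB.1.1
    rw [hA.2, hB.2] at *
    linarith
  -- derivative of Ta
  have hTaderiv : ∀ s ∈ Ioo (0:ℝ) y, HasDerivAt Ta (fpq q a (Ta s))⁻¹ s := by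
    intro s hs
    apply HasDerivAt.of_local_left_inverse hTacont.continuousAt
      (Phi_hasDerivAt hq0 a (hTapos s hs)) (fpq_pos (hTapos s hs).le).ne'
    filter_upwards [Ioo_mem_nhds hs.1 hs.2] with u hu
    exact (hTa u ⟨hu.1.le, hu.2.le⟩).2
  have hTbderiv : ∀ s ∈ Ioo (0:ℝ) y, HasDerivAt Tb (fpq q b (Tb s))⁻¹ s := by
    intro s hs
    apply HasDerivAt.of_local_left_inverse hTbcont.continuousAt
      (Phi_hasDerivAt hq0 b (hTbpos s hs)) (fpq_pos (hTbpos s hs).le).ne'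
    filter_upwards [Ioo_mem_nhds hs.1 hs.2] with u hu
    exact (hTb u ⟨hu.1.le, hu.2.le⟩).2
  -- the function H
  set H : ℝ → ℝ := fun s => Ta s ^ l * Tb s ^ (1 - l) with hHdef
  have hHcont : Continuous H := by
    apply Continuous.mul
    · exact continuous_iff_continuousAt.mpr fun s =>
        (hTacont.continuousAt).rpow_const (Or.inr hl0.le)
    · exact continuous_iff_continuousAt.mpr fun s =>
        (hTbcont.continuousAt).rpow_const (Or.inr (by linarith))
  have hH0 : H 0 = 0 := by
    simp [hHdef, hTa0, Real.zero_rpow hl0.ne']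
  set M := g a ^ l * g b ^ (1 - l) with hMdef
  have hM : 0 < M := by
    have := Real.rpow_pos_of_pos hga l
    have := Real.rpow_pos_of_pos hgb (1 - l)
    positivity
  have hHy : H y = M := by rw [hHdef]; simp only; rw [hTay, hTby]
  have hHmem : ∀ s ∈ Icc (0:ℝ) y, H s ∈ Icc (0:ℝ) M := by
    intro s hs
    have hA := hTa s hs
    have hB := hTb s hs
    constructor
    · have := Real.rpow_nonneg hA.1.1 l
      have := Real.rpow_nonneg hB.1.1 (1 - l)
      positivity
    · apply mul_le_mul (Real.rpow_le_rpow hA.1.1 hA.1.2 hl0.le)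
        (Real.rpow_le_rpow hB.1.1 hB.1.2 (by linarith))
        (Real.rpow_nonneg hB.1.1 _) (Real.rpow_nonneg hga.le _)
  -- the comparison function W
  set W : ℝ → ℝ := fun s => Phi q p (H s) - s with hWdef
  have hWcont : ContinuousOn W (Icc 0 y) := by
    apply ContinuousOn.sub _ continuousOn_id
    exact (Phi_contOn hq0 p hM.le).comp hHcont.continuousOn hHmem
  -- derivative of W
  have hWderiv : ∀ s ∈ Ioo (0:ℝ) y, ∃ d : ℝ, HasDerivAt W d s ∧ 0 ≤ d := by
    intro s hs
    have hx : 0 < Ta s := hTapos s hs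
    have hz : 0 < Tb s := hTbpos s hs
    have hzx : Tb s ≤ Ta s := hTbTa s ⟨hs.1.le, hs.2.le⟩
    -- derivative of H via exp form
    have hinner : HasDerivAt (fun u => l * Real.log (Ta u) + (1 - l) * Real.log (Tb u))
        (l * ((Ta s)⁻¹ * (fpq q a (Ta s))⁻¹) + (1 - l) * ((Tb s)⁻¹ * (fpq q b (Tb s))⁻¹)) s := by
      exact (((Real.hasDerivAt_log hx.ne').comp s (hTaderiv s hs)).const_mul l).add
        (((Real.hasDerivAt_log hz.ne').comp s (hTbderiv s hs)).const_mul (1 - l))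
    have hE : HasDerivAt (fun u => Real.exp (l * Real.log (Ta u) + (1 - l) * Real.log (Tb u)))
        (Real.exp (l * Real.log (Ta s) + (1 - l) * Real.log (Tb s)) *
          (l * ((Ta s)⁻¹ * (fpq q a (Ta s))⁻¹) + (1 - l) * ((Tb s)⁻¹ * (fpq q b (Tb s))⁻¹))) s :=
      (Real.hasDerivAt_exp _).comp s hinner
    have hexpeq : ∀ u ∈ Ioo (0:ℝ) y,
        Real.exp (l * Real.log (Ta u) + (1 - l) * Real.log (Tb u)) = H u := by
      intro u hu
      rw [Real.exp_add, hHdef]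
      simp only
      rw [Real.rpow_def_of_pos (hTapos u hu), Real.rpow_def_of_pos (hTbpos u hu),
        mul_comm (Real.log (Ta u)) l, mul_comm (Real.log (Tb u)) (1 - l)]
    have hHderiv : HasDerivAt H
        (H s * (l * ((Ta s)⁻¹ * (fpq q a (Ta s))⁻¹) + (1 - l) * ((Tb s)⁻¹ * (fpq q b (Tb s))⁻¹))) s := by
      rw [← hexpeq s hs]
      apply hE.congr_of_eventuallyEq
      filter_upwards [Ioo_mem_nhds hs.1 hs.2] with u hu
      exact (hexpeq u hu).symm
    have hHpos : 0 < H s := by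
      have := Real.rpow_pos_of_pos hx l
      have := Real.rpow_pos_of_pos hz (1 - l)
      rw [hHdef]; positivity
    have hPhiH : HasDerivAt W
        (fpq q p (H s) * (H s * (l * ((Ta s)⁻¹ * (fpq q a (Ta s))⁻¹) +
          (1 - l) * ((Tb s)⁻¹ * (fpq q b (Tb s))⁻¹))) - 1) s := by
      exact ((Phi_hasDerivAt hq0 p hHpos).comp s hHderiv).sub (hasDerivAt_id s)
    refine ⟨_, hPhiH, ?_⟩
    -- lower bound on the derivative
    rw [sub_nonneg]
    have hinva : (fpq q a (Ta s))⁻¹ = (1 + Ta s ^ q) ^ (1/a : ℝ) := by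
      rw [fpq, ← Real.rpow_neg (base_pos hx.le).le, neg_neg]
    have hinvb : (fpq q b (Tb s))⁻¹ = (1 + Tb s ^ q) ^ (1/b : ℝ) := by
      rw [fpq, ← Real.rpow_neg (base_pos hz.le).le, neg_neg]
    have hptw := pointwise (q := q) (by linarith : (0:ℝ) < q) ha hab hl0 hl1 hz hzx
    set C := (1 + (Ta s ^ l * Tb s ^ (1 - l)) ^ q) ^ (1 / p : ℝ) with hCdef
    have hC : 0 < C := Real.rpow_pos_of_pos (base_pos (by positivity)) _
    have hfp : fpq q p (H s) = C⁻¹ := by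
      rw [fpq, hHdef, hCdef, ← Real.rpow_neg (base_pos (by positivity)).le]
    have hD : C ≤ H s * (l * ((Ta s)⁻¹ * (fpq q a (Ta s))⁻¹) +
        (1 - l) * ((Tb s)⁻¹ * (fpq q b (Tb s))⁻¹)) := by
      rw [hinva, hinvb, hHdef]
      calc C ≤ Ta s ^ l * Tb s ^ (1 - l) *
            (l * ((1 + Ta s ^ q) ^ (1/a : ℝ) / Ta s) +
             (1 - l) * ((1 + Tb s ^ q) ^ (1/b : ℝ) / Tb s)) := hptw
        _ = Ta s ^ l * Tb s ^ (1 - l) *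
            (l * ((Ta s)⁻¹ * (1 + Ta s ^ q) ^ (1/a : ℝ)) +
             (1 - l) * ((Tb s)⁻¹ * (1 + Tb s ^ q) ^ (1/b : ℝ))) := by
            ring
    calc (1:ℝ) = C⁻¹ * C := (inv_mul_cancel₀ hC.ne').symm
      _ ≤ C⁻¹ * (H s * (l * ((Ta s)⁻¹ * (fpq q a (Ta s))⁻¹) +
          (1 - l) * ((Tb s)⁻¹ * (fpq q b (Tb s))⁻¹))) := by
          exact mul_le_mul_of_nonneg_left hD (inv_nonneg.mpr hC.le)
      _ = fpq q p (H s) * (H s * (l * ((Ta s)⁻¹ * (fpq q a (Ta s))⁻¹) +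
          (1 - l) * ((Tb s)⁻¹ * (fpq q b (Tb s))⁻¹))) := by rw [hfp]
  -- monotonicity of W
  have hWmono : MonotoneOn W (Icc 0 y) := by
    apply monotoneOn_of_deriv_nonneg (convex_Icc 0 y) hWcont
    · rw [interior_Icc]
      intro s hs
      obtain ⟨d, hd, _⟩ := hWderiv s hs
      exact hd.differentiableAt.differentiableWithinAt
    · rw [interior_Icc]
      intro s hs
      obtain ⟨d, hd, hd0⟩ := hWderiv s hs
      rw [hd.deriv]; exact hd0
  have hW0 : W 0 = 0 := by rw [hWdef]; simp [hH0, Phi_zero]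
  have hWy : 0 ≤ W y := by
    rw [← hW0]
    exact hWmono (left_mem_Icc.mpr hy.le) (right_mem_Icc.mpr hy.le) hy.le
  -- conclude
  have hfinal : y ≤ Phi q p M := by
    rw [hWdef] at hWy
    simp only at hWy
    rw [hHy] at hWy
    linarith
  by_contra hcon
  push_neg at hcon
  have : Phi q p M < Phi q p (g p) := Phi_strictMonoOn hq0 p hM.le (le_of_lt hgp) hcon
  rw [hΦp] at this
  linarith

end Aux


theorem sinh_pq_log_convex_in_p (q y : ℝ) (hq : 1 < q) (hy : 0 < y) (g : ℝ → ℝ)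
    (hg : ∀ p : ℝ, 1 < p → g p ∈ Set.Ioi (0:ℝ) ∧
      (∫ t in (0:ℝ)..g p, (1 + t ^ q) ^ (-(1 / p))) = y) :
    ConvexOn ℝ (Set.Ioi (1:ℝ)) (fun p => Real.log (g p)) := by
  have hg' : ∀ p : ℝ, 1 < p → 0 < g p ∧ Phi q p (g p) = y := fun p hp =>
    ⟨(hg p hp).1, (hg p hp).2⟩
  constructor
  · exact convex_Ioi 1
  · intro x hx z hz μ ν hμ hν hμν
    rw [Set.mem_Ioi] at hx hz
    simp only [smul_eq_mul]
    rcases eq_or_lt_of_le hμ with hμ0 | hμpos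
    · have hν1 : ν = 1 := by linarith
      simp [← hμ0, hν1]
    rcases eq_or_lt_of_le hν with hν0 | hνpos
    · have hμ1 : μ = 1 := by linarith
      simp [← hν0, hμ1]
    have hμ1 : μ < 1 := by linarith
    have hν1 : ν < 1 := by linarith
    have hcomb : 1 < μ * x + ν * z := by nlinarith
    have hgx := (hg' x hx).1
    have hgz := (hg' z hz).1
    have hgc := (hg' _ hcomb).1
    rcases le_total x z with hxz | hzx
    · have hk := key q y hq hy g hg' hx hxz hμpos hμ1
      have hν' : ν = 1 - μ := by linarith
      rw [hν']
      calc Real.log (g (μ * x + (1 - μ) * z))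
          ≤ Real.log (g x ^ μ * g z ^ (1 - μ)) := by
            apply Real.log_le_log _ hk
            rw [hν'] at hgc; exact hgc
        _ = μ * Real.log (g x) + (1 - μ) * Real.log (g z) := by
            rw [Real.log_mul (by positivity) (by positivity),
              Real.log_rpow hgx, Real.log_rpow hgz]
    · have hk := key q y hq hy g hg' hz hzx hνpos hν1
      have hμ' : μ = 1 - ν := by linarith
      have harg : ν * z + (1 - ν) * x = μ * x + ν * z := by rw [hμ']; ring
      rw [harg] at hk
      calc Real.log (g (μ * x + ν * z))
          ≤ Real.log (g z ^ ν * g x ^ (1 - ν)) := Real.log_le_log hgc hk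
        _ = μ * Real.log (g x) + ν * Real.log (g z) := by
            rw [Real.log_mul (by positivity) (by positivity),
              Real.log_rpow hgz, Real.log_rpow hgx, hμ']
            ring
end

section
/- Let a < b be real numbers and let f, g be real functions that are continuous on [a,b) and continuously differentiable on (a,b), with f(a) = g(a) = 0 and g(x)·g'(x) > 0 for all x ∈ (a,b). If the function x ↦ f'(x)/g'(x) is decreasing on (a,b), then f(x)/g(x) > f'(x)/g'(x) for every x ∈ (a,b). -/
/-! Since f and g vanish at a, Cauchy's mean value theorem gives f x / g x = f' c / g' c for some
c ∈ (a, x), and f' c / g' c > f' x / g' x because f'/g' is strictly decreasing. -/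

open Set

theorem exists_mem_Ioo_div_eq_deriv_div_deriv {a x : ℝ} (hax : a < x) {f g f' g' : ℝ → ℝ}
    (hfc : ContinuousOn f (Icc a x)) (hgc : ContinuousOn g (Icc a x))
    (hf : ∀ y ∈ Ioo a x, HasDerivAt f (f' y) y) (hg : ∀ y ∈ Ioo a x, HasDerivAt g (g' y) y)
    (hfa : f a = 0) (hga : g a = 0) (hgx : g x ≠ 0) (hg' : ∀ y ∈ Ioo a x, g' y ≠ 0) :
    ∃ c ∈ Ioo a x, f x / g x = f' c / g' c := by
  obtain ⟨c, hc, hcv⟩ := exists_ratio_hasDerivAt_eq_ratio_slope f f' hax hfc hf g g' hgc hg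
  rw [hfa, hga, sub_zero, sub_zero] at hcv
  exact ⟨c, hc, (div_eq_div_iff hgx (hg' c hc)).2 (by linarith)⟩

theorem monotone_lhopital_rule_general (a b : ℝ) (f g f' g' : ℝ → ℝ)
    (hfc : ContinuousOn f (Set.Ico a b)) (hgc : ContinuousOn g (Set.Ico a b))
    (hf : ∀ x ∈ Set.Ioo a b, HasDerivAt f (f' x) x)
    (hg : ∀ x ∈ Set.Ioo a b, HasDerivAt g (g' x) x)
    (hfa : f a = 0) (hga : g a = 0)
    (hgg' : ∀ x ∈ Set.Ioo a b, 0 < g x * g' x)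
    (hdec : StrictAntiOn (fun x => f' x / g' x) (Set.Ioo a b)) :
    ∀ x ∈ Set.Ioo a b, f' x / g' x < f x / g x := by
  intro x hx
  have hIcc : Icc a x ⊆ Ico a b := Icc_subset_Ico_right hx.2
  have hIoo : Ioo a x ⊆ Ioo a b := Ioo_subset_Ioo_right hx.2.le
  obtain ⟨c, hc, hratio⟩ := exists_mem_Ioo_div_eq_deriv_div_deriv hx.1 (hfc.mono hIcc)
    (hgc.mono hIcc) (fun y hy => hf y (hIoo hy)) (fun y hy => hg y (hIoo hy)) hfa hga
    (left_ne_zero_of_mul (hgg' x hx).ne') (fun y hy => right_ne_zero_of_mul (hgg' y (hIoo hy)).ne')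
  rw [hratio]
  exact hdec (hIoo hc) hx hc.2

theorem monotone_lhopital_rule (a b : ℝ) (hab : a < b) (f g f' g' : ℝ → ℝ)
    (hfc : ContinuousOn f (Set.Ico a b)) (hgc : ContinuousOn g (Set.Ico a b))
    (hf : ∀ x ∈ Set.Ioo a b, HasDerivAt f (f' x) x)
    (hg : ∀ x ∈ Set.Ioo a b, HasDerivAt g (g' x) x)
    (hf'c : ContinuousOn f' (Set.Ioo a b)) (hg'c : ContinuousOn g' (Set.Ioo a b))
    (hfa : f a = 0) (hga : g a = 0)
    (hgg' : ∀ x ∈ Set.Ioo a b, 0 < g x * g' x)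
    (hdec : StrictAntiOn (fun x => f' x / g' x) (Set.Ioo a b)) :
    ∀ x ∈ Set.Ioo a b, f' x / g' x < f x / g x :=
  monotone_lhopital_rule_general a b f g f' g' hfc hgc hf hg hfa hga hgg' hdec
end

section
/- Fix q > 1 and y > 0, and let g : ℝ → ℝ satisfy g(p) ∈ (0,1) and ∫_0^{g(p)} (1-t^q)^{-1/p} dt = y for every p > 1. Then g is concave on (1,∞) if and only if for every p > 1, writing x = g(p), one has (q x^{q-1}/(p (1-x^q)^{1-1/p})) · (∫_0^x φ₁(p,t) dt)² − 2 log(1-x^q) · ∫_0^x φ₁(p,t) dt + ∫_0^x φ₂(p,t) dt ≥ 0, where φ₁(p,t) = log(1-t^q)/(1-t^q)^{1/p} and φ₂(p,t) = log(1-t^q)(log(1-t^q) − 2p)/(1-t^q)^{1/p}. -/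
open MeasureTheory Real Set Filter Topology intervalIntegral Asymptotics

noncomputable def spqW (q : ℝ) (n : ℕ) (p t : ℝ) : ℝ :=
  (Real.log (1 - t ^ q)) ^ n * (1 - t ^ q) ^ (-(1 / p))

lemma spq_base_pos {q t : ℝ} (hq : 1 < q) (ht0 : 0 ≤ t) (ht1 : t < 1) :
    0 < 1 - t ^ q := by
  have : t ^ q < 1 := by
    rcases eq_or_lt_of_le ht0 with h | h
    · rw [← h, Real.zero_rpow (by positivity)]; norm_num
    · exact Real.rpow_lt_one ht0 ht1 (by linarith)
  linarith

lemma spq_base_le_one {q t : ℝ} (hq : 1 < q) (ht0 : 0 ≤ t) : 1 - t ^ q ≤ 1 := by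
  have := Real.rpow_nonneg ht0 q; linarith

lemma spqW_contAt {q : ℝ} (hq : 1 < q) (n : ℕ) {p t : ℝ} (hp : p ≠ 0)
    (ht0 : 0 ≤ t) (ht1 : t < 1) :
    ContinuousAt (fun z : ℝ × ℝ => spqW q n z.1 z.2) (p, t) := by
  have hb : 0 < 1 - t ^ q := spq_base_pos hq ht0 ht1
  have hbase : ContinuousAt (fun z : ℝ × ℝ => 1 - z.2 ^ q) (p, t) := by
    have : ContinuousAt (fun x : ℝ => x ^ q) t :=
      Real.continuousAt_rpow_const t q (Or.inr (by linarith))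
    exact continuousAt_const.sub (ContinuousAt.comp (g := fun x : ℝ => x ^ q) (f := Prod.snd) (x := (p, t)) this continuousAt_snd)
  have hlog : ContinuousAt (fun z : ℝ × ℝ => Real.log (1 - z.2 ^ q)) (p, t) :=
    hbase.log hb.ne'
  have hexp : ContinuousAt (fun z : ℝ × ℝ => -(1 / z.1)) (p, t) := by
    exact (continuousAt_const.div continuousAt_fst hp).neg
  have hrpow : ContinuousAt (fun z : ℝ × ℝ => (1 - z.2 ^ q) ^ (-(1 / z.1))) (p, t) :=
    hbase.rpow hexp (Or.inl hb.ne')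
  exact (hlog.pow n).mul hrpow

lemma spqW_contAt' {q : ℝ} (hq : 1 < q) (n : ℕ) {p t : ℝ} (hp : p ≠ 0)
    (ht0 : 0 ≤ t) (ht1 : t < 1) : ContinuousAt (fun s : ℝ => spqW q n p s) t := by
  have := (spqW_contAt hq n hp ht0 ht1).comp
    ((continuousAt_const (y := p)).prodMk continuousAt_id)
  exact this

lemma spqW_intervalIntegrable {q : ℝ} (hq : 1 < q) (n : ℕ) {p a b c : ℝ} (hp : p ≠ 0)
    (ha : a ∈ Set.Icc 0 c) (hb : b ∈ Set.Icc 0 c) (hc : c < 1) :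
    IntervalIntegrable (spqW q n p) volume a b := by
  apply ContinuousOn.intervalIntegrable
  intro t ht
  have h0 : 0 ≤ t := by
    rcases Set.mem_uIcc.mp ht with ⟨h, _⟩ | ⟨h, _⟩ <;> [linarith [ha.1]; linarith [hb.1]]
  have h1 : t < 1 := by
    rcases Set.mem_uIcc.mp ht with ⟨_, h⟩ | ⟨_, h⟩ <;> [linarith [hb.2]; linarith [ha.2]]
  exact (spqW_contAt' hq n hp h0 h1).continuousWithinAt

lemma spqW_hasDerivAt {q : ℝ} (n : ℕ) {p t : ℝ} (hb : 0 < 1 - t ^ q) (hp : p ≠ 0) :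
    HasDerivAt (fun p => spqW q n p t) (spqW q (n + 1) p t / p ^ 2) p := by
  set b := 1 - t ^ q with hbdef
  have hrw : ∀ r : ℝ, r ≠ 0 → spqW q n r t = (Real.log b) ^ n * Real.exp (Real.log b * (-(1 / r))) := by
    intro r _; rw [spqW, Real.rpow_def_of_pos hb]
  have h1 : HasDerivAt (fun r : ℝ => -(1 / r)) (1 / p ^ 2) p := by
    simpa [Pi.neg_def] using ((hasDerivAt_inv hp).const_mul (1:ℝ)).neg
  have h2 : HasDerivAt (fun r : ℝ => Real.log b * (-(1 / r))) (Real.log b / p ^ 2) p := by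
    simpa [mul_one_div, div_eq_mul_inv] using h1.const_mul (Real.log b)
  have h3 : HasDerivAt (fun r : ℝ => (Real.log b) ^ n * Real.exp (Real.log b * (-(1 / r))))
      ((Real.log b) ^ n * (Real.exp (Real.log b * (-(1 / p))) * (Real.log b / p ^ 2))) p :=
    (h2.exp).const_mul _
  have heq : (fun r : ℝ => spqW q n r t) =ᶠ[𝓝 p] fun r => (Real.log b) ^ n * Real.exp (Real.log b * (-(1 / r))) := by
    filter_upwards [isOpen_ne.mem_nhds hp] with r hr using hrw r hr
  have hd : spqW q (n + 1) p t / p ^ 2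
      = (Real.log b) ^ n * (Real.exp (Real.log b * (-(1 / p))) * (Real.log b / p ^ 2)) := by
    rw [spqW, ← Real.rpow_def_of_pos hb]; ring
  exact hd ▸ h3.congr_of_eventuallyEq heq

section X
variable {q : ℝ}

lemma spqW_norm_le (hq : 1 < q) (n : ℕ) {p t x : ℝ} (hp : 1 ≤ p)
    (ht0 : 0 ≤ t) (htx : t ≤ x) (hx1 : x < 1) :
    ‖spqW q n p t‖ ≤ (-Real.log (1 - x ^ q)) ^ n * (1 - x ^ q)⁻¹ := by
  have hx0 : 0 ≤ x := le_trans ht0 htx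
  have hbx : 0 < 1 - x ^ q := spq_base_pos hq hx0 hx1
  have hbt : 0 < 1 - t ^ q := spq_base_pos hq ht0 (lt_of_le_of_lt htx hx1)
  have hle : 1 - x ^ q ≤ 1 - t ^ q := by
    have : t ^ q ≤ x ^ q := Real.rpow_le_rpow ht0 htx (by linarith)
    linarith
  have hbt1 : 1 - t ^ q ≤ 1 := by
    have := Real.rpow_nonneg ht0 q; linarith
  have hlog1 : ‖(Real.log (1 - t ^ q)) ^ n‖ ≤ (-Real.log (1 - x ^ q)) ^ n := by
    rw [norm_pow]
    apply pow_le_pow_left₀ (norm_nonneg _)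
    rw [Real.norm_eq_abs, abs_le]
    constructor
    · have := Real.log_le_log hbx hle
      have h2 : Real.log (1 - t ^ q) ≤ 0 := Real.log_nonpos hbt.le hbt1
      linarith [Real.log_nonpos hbx.le (by linarith : 1 - x ^ q ≤ 1)]
    · have h2 : Real.log (1 - t ^ q) ≤ 0 := Real.log_nonpos hbt.le hbt1
      have := Real.log_le_log hbx hle
      linarith
  have hr : ‖(1 - t ^ q) ^ (-(1 / p))‖ ≤ (1 - x ^ q)⁻¹ := by
    rw [Real.norm_eq_abs, abs_of_pos (Real.rpow_pos_of_pos hbt _)]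
    calc (1 - t ^ q) ^ (-(1 / p)) ≤ (1 - x ^ q) ^ (-(1 / p)) :=
          Real.rpow_le_rpow_of_nonpos hbx hle (neg_nonpos.mpr (by positivity))
      _ ≤ (1 - x ^ q) ^ (-1 : ℝ) := by
          apply Real.rpow_le_rpow_of_exponent_ge hbx (by linarith)
          have h1 : 1 / p ≤ 1 := by
            rw [div_le_one (by linarith)]; linarith
          linarith
      _ = (1 - x ^ q)⁻¹ := Real.rpow_neg_one _
  calc ‖spqW q n p t‖ = ‖(Real.log (1 - t ^ q)) ^ n‖ * ‖(1 - t ^ q) ^ (-(1 / p))‖ := by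
        rw [spqW, norm_mul]
    _ ≤ (-Real.log (1 - x ^ q)) ^ n * (1 - x ^ q)⁻¹ := by
        apply mul_le_mul hlog1 hr (norm_nonneg _)
        exact pow_nonneg (neg_nonneg.mpr (Real.log_nonpos hbx.le (by linarith))) n

lemma spq_ball_gt (p₀ : ℝ) (hp₀ : 1 < p₀) :
    ∀ p ∈ Metric.ball p₀ ((p₀ - 1) / 2), 1 < p := by
  intro p hp
  rw [Metric.mem_ball, Real.dist_eq] at hp
  have := abs_lt.mp hp
  linarith [this.1]

lemma spqW_contOn (hq : 1 < q) (n : ℕ) {p x : ℝ} (hp : p ≠ 0) (hx0 : 0 ≤ x) (hx1 : x < 1) :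
    ContinuousOn (fun t => spqW q n p t) (Set.uIoc (0:ℝ) x) := by
  intro t ht
  rw [Set.uIoc_of_le hx0] at ht
  exact (spqW_contAt' hq n hp ht.1.le (lt_of_le_of_lt ht.2 hx1)).continuousWithinAt

lemma spq_hasDerivAt_param (hq : 1 < q) (n : ℕ) {p₀ x : ℝ} (hp₀ : 1 < p₀)
    (hx : x ∈ Set.Ioo (0:ℝ) 1) :
    HasDerivAt (fun p => ∫ t in (0:ℝ)..x, spqW q n p t)
      (∫ t in (0:ℝ)..x, spqW q (n + 1) p₀ t / p₀ ^ 2) p₀ := by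
  have hball := spq_ball_gt p₀ hp₀
  have hε : 0 < (p₀ - 1) / 2 := by linarith
  set C : ℝ := (-Real.log (1 - x ^ q)) ^ (n + 1) * (1 - x ^ q)⁻¹ with hC
  refine (intervalIntegral.hasDerivAt_integral_of_dominated_loc_of_deriv_le
    (F := fun p t => spqW q n p t) (F' := fun p t => spqW q (n + 1) p t / p ^ 2)
    (bound := fun _ => C) (Metric.ball_mem_nhds p₀ hε) ?_ ?_ ?_ ?_ ?_ ?_).2
  · filter_upwards [isOpen_Ioi.mem_nhds hp₀] with p hp
    exact (spqW_contOn hq n (zero_lt_one.trans hp).ne' hx.1.le hx.2).aestronglyMeasurable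
      measurableSet_uIoc
  · exact spqW_intervalIntegrable hq n (by linarith : (0:ℝ) < p₀).ne' ⟨le_refl 0, hx.1.le⟩ ⟨hx.1.le, le_refl x⟩ hx.2
  · exact (((spqW_contOn hq (n+1) (by linarith : (0:ℝ) < p₀).ne' hx.1.le hx.2).div_const _)).aestronglyMeasurable measurableSet_uIoc
  · refine Filter.Eventually.of_forall (fun t ht => fun p hp => ?_)
    have hp1 : 1 < p := hball p hp
    rw [Set.uIoc_of_le hx.1.le] at ht
    have h1 : ‖spqW q (n + 1) p t‖ ≤ C :=
      spqW_norm_le hq (n + 1) hp1.le ht.1.le ht.2 hx.2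
    rw [norm_div]
    calc ‖spqW q (n + 1) p t‖ / ‖p ^ 2‖ ≤ ‖spqW q (n + 1) p t‖ := by
          apply div_le_self (norm_nonneg _)
          rw [Real.norm_eq_abs, abs_of_pos (by positivity : (0:ℝ) < p ^ 2)]
          nlinarith
      _ ≤ C := h1
  · exact intervalIntegrable_const
  · refine Filter.Eventually.of_forall (fun t ht => fun p hp => ?_)
    have hp1 : 1 < p := hball p hp
    rw [Set.uIoc_of_le hx.1.le] at ht
    exact spqW_hasDerivAt n (spq_base_pos hq ht.1.le (lt_of_le_of_lt ht.2 hx.2)) (by linarith)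

end X
section main
variable {q y : ℝ} {g : ℝ → ℝ}

-- membership in a common Icc for interval integrability between x₀ and g p
lemma spq_mem_icc {a b : ℝ} (ha : a ∈ Set.Ioo (0:ℝ) 1) (hb : b ∈ Set.Ioo (0:ℝ) 1) :
    a ∈ Set.Icc (0:ℝ) (max a b) ∧ b ∈ Set.Icc (0:ℝ) (max a b) ∧ max a b < 1 :=
  ⟨⟨ha.1.le, le_max_left _ _⟩, ⟨hb.1.le, le_max_right _ _⟩, max_lt ha.2 hb.2⟩

lemma spq_uIoc_dist {x₀ b t : ℝ} (ht : t ∈ Set.uIoc x₀ b) : |t - x₀| ≤ |b - x₀| := by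
  rcases le_total x₀ b with h | h
  · rw [Set.uIoc_of_le h] at ht
    rw [abs_of_nonneg (by linarith [ht.1.le] : (0:ℝ) ≤ t - x₀),
      abs_of_nonneg (by linarith : (0:ℝ) ≤ b - x₀)]
    linarith [ht.2]
  · rw [Set.uIoc_of_ge h] at ht
    rw [abs_of_nonpos (by linarith [ht.2] : t - x₀ ≤ 0), abs_of_nonpos (by linarith : b - x₀ ≤ 0)]
    linarith [ht.1]

lemma spq_one_le_W0 (hq : 1 < q) {p t : ℝ} (hp : 1 < p) (ht0 : 0 ≤ t) (ht1 : t < 1) :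
    1 ≤ spqW q 0 p t := by
  have hb := spq_base_pos hq ht0 ht1
  have hb1 : 1 - t ^ q ≤ 1 := by have := Real.rpow_nonneg ht0 q; linarith
  rw [spqW, pow_zero, one_mul]
  exact Real.one_le_rpow_of_pos_of_le_one_of_nonpos hb hb1
    (neg_nonpos.mpr (by positivity))

theorem spq_g_hasDerivAt (hq : 1 < q)
    (hg : ∀ p : ℝ, 1 < p → g p ∈ Set.Ioo (0:ℝ) 1 ∧
      (∫ t in (0:ℝ)..g p, (1 - t ^ q) ^ (-(1 / p))) = y)
    {p₀ : ℝ} (hp₀ : 1 < p₀) :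
    HasDerivAt g
      (-(1 / p₀ ^ 2) * (∫ t in (0:ℝ)..g p₀, spqW q 1 p₀ t) * (1 - g p₀ ^ q) ^ (1 / p₀)) p₀ := by
  have hy' : ∀ p : ℝ, 1 < p → (∫ t in (0:ℝ)..g p, spqW q 0 p t) = y := by
    intro p hp
    have := (hg p hp).2
    simpa [spqW] using this
  set x₀ := g p₀ with hx₀def
  have hx₀ : x₀ ∈ Set.Ioo (0:ℝ) 1 := (hg p₀ hp₀).1
  have hbx₀ : 0 < 1 - x₀ ^ q := spq_base_pos hq hx₀.1.le hx₀.2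
  set B : ℝ := spqW q 0 p₀ x₀ with hBdef
  have hBval : B = (1 - x₀ ^ q) ^ (-(1 / p₀)) := by rw [hBdef, spqW, pow_zero, one_mul]
  have hBpos : 0 < B := by rw [hBval]; positivity
  set A : ℝ := ∫ t in (0:ℝ)..x₀, spqW q 1 p₀ t / p₀ ^ 2 with hAdef
  set D : ℝ → ℝ := fun p => (∫ t in (0:ℝ)..x₀, spqW q 0 p t) - y with hDdef
  have hD : HasDerivAt D A p₀ := (spq_hasDerivAt_param hq 0 hp₀ hx₀).sub_const y
  have hD0 : D p₀ = 0 := by simp [hDdef, hx₀def, hy' p₀ hp₀]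
  have hp1ev : ∀ᶠ p in 𝓝 p₀, 1 < p := isOpen_Ioi.mem_nhds hp₀
  -- key identity
  have hkey : ∀ p : ℝ, 1 < p → (∫ t in x₀..g p, spqW q 0 p t) = -D p := by
    intro p hp
    obtain ⟨hm1, hm2, hm3⟩ := spq_mem_icc hx₀ (hg p hp).1
    have h0c : (0:ℝ) ∈ Set.Icc (0:ℝ) (max x₀ (g p)) := ⟨le_refl 0, le_trans hx₀.1.le (le_max_left _ _)⟩
    have hi1 : IntervalIntegrable (spqW q 0 p) volume 0 x₀ :=
      spqW_intervalIntegrable hq 0 (by linarith : (0:ℝ) < p).ne' h0c hm1 hm3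
    have hi2 : IntervalIntegrable (spqW q 0 p) volume x₀ (g p) :=
      spqW_intervalIntegrable hq 0 (by linarith : (0:ℝ) < p).ne' hm1 hm2 hm3
    have := intervalIntegral.integral_add_adjacent_intervals hi1 hi2
    rw [hy' p hp] at this
    simp only [hDdef]
    linarith [this]
  -- lipschitz-type bound
  have hbd : ∀ p : ℝ, 1 < p → |g p - x₀| ≤ |D p| := by
    intro p hp
    obtain ⟨hm1, hm2, hm3⟩ := spq_mem_icc hx₀ (hg p hp).1
    have hi2 : IntervalIntegrable (spqW q 0 p) volume x₀ (g p) :=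
      spqW_intervalIntegrable hq 0 (by linarith : (0:ℝ) < p).ne' hm1 hm2 hm3
    have hone : ∀ t ∈ Set.Icc (min x₀ (g p)) (max x₀ (g p)), (1:ℝ) ≤ spqW q 0 p t := by
      intro t ht
      have ht0 : 0 ≤ t := le_trans (le_min hx₀.1.le (hg p hp).1.1.le) ht.1
      have ht1 : t < 1 := lt_of_le_of_lt ht.2 hm3
      exact spq_one_le_W0 hq hp ht0 ht1
    rcases le_total x₀ (g p) with hle | hle
    · have h1 : g p - x₀ = ∫ t in x₀..g p, (1:ℝ) := by simp
      have h2 : (∫ t in x₀..g p, (1:ℝ)) ≤ ∫ t in x₀..g p, spqW q 0 p t := by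
        apply intervalIntegral.integral_mono_on hle intervalIntegrable_const hi2
        intro t ht
        exact hone t (by rwa [min_eq_left hle, max_eq_right hle])
      rw [hkey p hp] at h2
      rw [abs_of_nonneg (by linarith : (0:ℝ) ≤ g p - x₀)]
      calc g p - x₀ ≤ -D p := by linarith [h1 ▸ h2]
        _ ≤ |D p| := neg_le_abs _
    · have h1 : x₀ - g p = ∫ t in (g p)..x₀, (1:ℝ) := by simp
      have h2 : (∫ t in (g p)..x₀, (1:ℝ)) ≤ ∫ t in (g p)..x₀, spqW q 0 p t := by
        apply intervalIntegral.integral_mono_on hle intervalIntegrable_const hi2.symm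
        intro t ht
        exact hone t (by rwa [min_eq_right hle, max_eq_left hle])
      have h3 : (∫ t in (g p)..x₀, spqW q 0 p t) = D p := by
        have := hkey p hp
        rw [intervalIntegral.integral_symm] at this
        linarith [this]
      rw [abs_of_nonpos (by linarith : g p - x₀ ≤ 0)]
      calc -(g p - x₀) ≤ D p := by linarith [h1 ▸ h2, h3]
        _ ≤ |D p| := le_abs_self _
  -- continuity of g at p₀
  have htD : Tendsto D (𝓝 p₀) (𝓝 0) := by
    have := hD.continuousAt.tendsto
    rwa [hD0] at this
  have hgt : Tendsto g (𝓝 p₀) (𝓝 x₀) := by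
    rw [← tendsto_sub_nhds_zero_iff]
    refine squeeze_zero_norm' ?_ (by simpa using htD.abs : Tendsto (fun p => |D p|) (𝓝 p₀) (𝓝 0))
    filter_upwards [hp1ev] with p hp using hbd p hp
  -- big-O
  have hDlittle : (fun p => D p - (p - p₀) * A) =o[𝓝 p₀] fun p => p - p₀ := by
    have := hasDerivAt_iff_isLittleO.mp hD
    simpa [hD0, smul_eq_mul] using this
  have hbigO1 : D =O[𝓝 p₀] fun p => p - p₀ := by
    have := hD.isBigO_sub
    simpa [hD0] using this
  have hbigO : (fun p => g p - x₀) =O[𝓝 p₀] fun p => p - p₀ := by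
    refine (Asymptotics.isBigO_iff.mpr ⟨1, ?_⟩).trans hbigO1
    filter_upwards [hp1ev] with p hp
    simpa [Real.norm_eq_abs] using hbd p hp
  -- the remainder
  set R : ℝ → ℝ := fun p => (∫ t in x₀..g p, spqW q 0 p t) - (g p - x₀) * B with hRdef
  have hRo : R =o[𝓝 p₀] fun p => g p - x₀ := by
    rw [Asymptotics.isLittleO_iff]
    intro ε hε
    have hc : ContinuousAt (fun z : ℝ × ℝ => spqW q 0 z.1 z.2) (p₀, x₀) :=
      spqW_contAt hq 0 (by linarith : (0:ℝ) < p₀).ne' hx₀.1.le hx₀.2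
    obtain ⟨δ, hδ, hδc⟩ := Metric.continuousAt_iff.mp hc ε hε
    have hev1 : ∀ᶠ p in 𝓝 p₀, |p - p₀| < δ := by
      have := Metric.tendsto_nhds.mp (tendsto_id (x := 𝓝 p₀)) δ hδ
      simpa [Real.dist_eq] using this
    have hev2 : ∀ᶠ p in 𝓝 p₀, |g p - x₀| < δ := by
      have := Metric.tendsto_nhds.mp hgt δ hδ
      simpa [Real.dist_eq] using this
    filter_upwards [hp1ev, hev1, hev2] with p hp hd1 hd2
    obtain ⟨hm1, hm2, hm3⟩ := spq_mem_icc hx₀ (hg p hp).1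
    have hi2 : IntervalIntegrable (spqW q 0 p) volume x₀ (g p) :=
      spqW_intervalIntegrable hq 0 (by linarith : (0:ℝ) < p).ne' hm1 hm2 hm3
    have hRint : R p = ∫ t in x₀..g p, (spqW q 0 p t - B) := by
      rw [intervalIntegral.integral_sub hi2 intervalIntegrable_const,
        intervalIntegral.integral_const, smul_eq_mul, hRdef]
    have hptw : ∀ t ∈ Set.uIoc x₀ (g p), ‖spqW q 0 p t - B‖ ≤ ε := by
      intro t ht
      have hdist : dist ((p, t) : ℝ × ℝ) (p₀, x₀) < δ := by
        rw [Prod.dist_eq]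
        apply max_lt
        · rwa [Real.dist_eq]
        · rw [Real.dist_eq]
          exact lt_of_le_of_lt (spq_uIoc_dist ht) hd2
      have := hδc hdist
      rw [Real.dist_eq] at this
      exact (le_of_lt this)
    calc ‖R p‖ = ‖∫ t in x₀..g p, (spqW q 0 p t - B)‖ := by rw [hRint]
      _ ≤ ε * |g p - x₀| := intervalIntegral.norm_integral_le_of_norm_le_const hptw
      _ = ε * ‖g p - x₀‖ := by rw [Real.norm_eq_abs]
  have hRo' : R =o[𝓝 p₀] fun p => p - p₀ := hRo.trans_isBigO hbigO
  -- assemble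
  set V : ℝ := -A / B with hVdef
  have hmain : HasDerivAt g V p₀ := by
    rw [hasDerivAt_iff_isLittleO]
    have heq : (fun p => g p - g p₀ - (p - p₀) • V) =ᶠ[𝓝 p₀]
        fun p => (1 / B) * (-(D p - (p - p₀) * A) - R p) := by
      filter_upwards [hp1ev] with p hp
      have hk := hkey p hp
      have hR : (∫ t in x₀..g p, spqW q 0 p t) = (g p - x₀) * B + R p := by
        rw [hRdef]; ring
      rw [hk] at hR
      have hBne : B ≠ 0 := hBpos.ne'
      rw [smul_eq_mul, ← hx₀def]
      have hVB : V * B = -A := by rw [hVdef]; field_simp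
      field_simp [hVdef]
      linear_combination (-1:ℝ) * hR - (p - p₀) * hVB
    refine (Asymptotics.IsLittleO.congr' ?_ heq.symm (EventuallyEq.refl _ _))
    exact (hDlittle.neg_left.sub hRo').const_mul_left (1 / B)
  -- rewrite the derivative value
  have hval : V = -(1 / p₀ ^ 2) * (∫ t in (0:ℝ)..x₀, spqW q 1 p₀ t) * (1 - x₀ ^ q) ^ (1 / p₀) := by
    have hAint : A = (∫ t in (0:ℝ)..x₀, spqW q 1 p₀ t) / p₀ ^ 2 := by
      rw [hAdef, intervalIntegral.integral_div]
    have hBinv : 1 / B = (1 - x₀ ^ q) ^ (1 / p₀) := by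
      rw [hBval, Real.rpow_neg hbx₀.le, one_div, inv_inv]
    rw [hVdef, hAint, ← hBinv]
    ring
  rw [← hval]
  exact hmain

end main
section comp
variable {q : ℝ} {g : ℝ → ℝ}

theorem spq_comp_hasDerivAt (hq : 1 < q)
    (hmem : ∀ p : ℝ, 1 < p → g p ∈ Set.Ioo (0:ℝ) 1)
    {p₀ g' : ℝ} (hp₀ : 1 < p₀) (hgd : HasDerivAt g g' p₀) (n : ℕ) :
    HasDerivAt (fun p => ∫ t in (0:ℝ)..g p, spqW q n p t)
      ((∫ t in (0:ℝ)..g p₀, spqW q (n + 1) p₀ t / p₀ ^ 2) + spqW q n p₀ (g p₀) * g') p₀ := by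
  set x₀ := g p₀ with hx₀def
  have hx₀ : x₀ ∈ Set.Ioo (0:ℝ) 1 := hmem p₀ hp₀
  have hp1ev : ∀ᶠ p in 𝓝 p₀, 1 < p := isOpen_Ioi.mem_nhds hp₀
  have hgt : Tendsto g (𝓝 p₀) (𝓝 x₀) := hgd.continuousAt.tendsto
  set W : ℝ := spqW q n p₀ x₀ with hWdef
  set S : ℝ → ℝ := fun p => ∫ t in x₀..g p, spqW q n p t with hSdef
  have hbigO : (fun p => g p - x₀) =O[𝓝 p₀] fun p => p - p₀ := hgd.isBigO_sub
  -- remainder is little-o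
  set R : ℝ → ℝ := fun p => S p - (g p - x₀) * W with hRdef
  have hRo : R =o[𝓝 p₀] fun p => g p - x₀ := by
    rw [Asymptotics.isLittleO_iff]
    intro ε hε
    have hc : ContinuousAt (fun z : ℝ × ℝ => spqW q n z.1 z.2) (p₀, x₀) :=
      spqW_contAt hq n (by linarith : (0:ℝ) < p₀).ne' hx₀.1.le hx₀.2
    obtain ⟨δ, hδ, hδc⟩ := Metric.continuousAt_iff.mp hc ε hε
    have hev1 : ∀ᶠ p in 𝓝 p₀, |p - p₀| < δ := by
      have := Metric.tendsto_nhds.mp (tendsto_id (x := 𝓝 p₀)) δ hδ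
      simpa [Real.dist_eq] using this
    have hev2 : ∀ᶠ p in 𝓝 p₀, |g p - x₀| < δ := by
      have := Metric.tendsto_nhds.mp hgt δ hδ
      simpa [Real.dist_eq] using this
    filter_upwards [hp1ev, hev1, hev2] with p hp hd1 hd2
    obtain ⟨hm1, hm2, hm3⟩ := spq_mem_icc hx₀ (hmem p hp)
    have hi2 : IntervalIntegrable (spqW q n p) volume x₀ (g p) :=
      spqW_intervalIntegrable hq n (by linarith : (0:ℝ) < p).ne' hm1 hm2 hm3
    have hRint : R p = ∫ t in x₀..g p, (spqW q n p t - W) := by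
      rw [intervalIntegral.integral_sub hi2 intervalIntegrable_const,
        intervalIntegral.integral_const, smul_eq_mul, hRdef]
    have hptw : ∀ t ∈ Set.uIoc x₀ (g p), ‖spqW q n p t - W‖ ≤ ε := by
      intro t ht
      have hdist : dist ((p, t) : ℝ × ℝ) (p₀, x₀) < δ := by
        rw [Prod.dist_eq]
        apply max_lt
        · rwa [Real.dist_eq]
        · rw [Real.dist_eq]
          exact lt_of_le_of_lt (spq_uIoc_dist ht) hd2
      have := hδc hdist
      rw [Real.dist_eq] at this
      exact le_of_lt this
    calc ‖R p‖ = ‖∫ t in x₀..g p, (spqW q n p t - W)‖ := by rw [hRint]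
      _ ≤ ε * |g p - x₀| := intervalIntegral.norm_integral_le_of_norm_le_const hptw
      _ = ε * ‖g p - x₀‖ := by rw [Real.norm_eq_abs]
  have hRo' : R =o[𝓝 p₀] fun p => p - p₀ := hRo.trans_isBigO hbigO
  -- S has derivative W * g'
  have hS : HasDerivAt S (W * g') p₀ := by
    rw [hasDerivAt_iff_isLittleO]
    have hS0 : S p₀ = 0 := by simp [hSdef, hx₀def]
    have heq : (fun p => S p - S p₀ - (p - p₀) • (W * g')) =ᶠ[𝓝 p₀]
        fun p => R p + W * (g p - x₀ - (p - p₀) * g') := by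
      filter_upwards with p
      rw [hS0, smul_eq_mul, hRdef]
      ring
    refine Asymptotics.IsLittleO.congr' ?_ heq.symm (EventuallyEq.refl _ _)
    have h2 : (fun p => g p - x₀ - (p - p₀) * g') =o[𝓝 p₀] fun p => p - p₀ := by
      have := hasDerivAt_iff_isLittleO.mp hgd
      simpa [smul_eq_mul] using this
    exact hRo'.add (h2.const_mul_left W)
  -- combine with the parameter derivative
  have h1 := spq_hasDerivAt_param hq n hp₀ hx₀
  have hsum := h1.add hS
  have heqΦ : (fun p => (∫ t in (0:ℝ)..x₀, spqW q n p t) + S p) =ᶠ[𝓝 p₀]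
      fun p => ∫ t in (0:ℝ)..g p, spqW q n p t := by
    filter_upwards [hp1ev] with p hp
    obtain ⟨hm1, hm2, hm3⟩ := spq_mem_icc hx₀ (hmem p hp)
    have h0c : (0:ℝ) ∈ Set.Icc (0:ℝ) (max x₀ (g p)) :=
      ⟨le_refl 0, le_trans hx₀.1.le (le_max_left _ _)⟩
    have hi1 : IntervalIntegrable (spqW q n p) volume 0 x₀ :=
      spqW_intervalIntegrable hq n (by linarith : (0:ℝ) < p).ne' h0c hm1 hm3
    have hi2 : IntervalIntegrable (spqW q n p) volume x₀ (g p) :=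
      spqW_intervalIntegrable hq n (by linarith : (0:ℝ) < p).ne' hm1 hm2 hm3
    exact intervalIntegral.integral_add_adjacent_intervals hi1 hi2
  exact hsum.congr_of_eventuallyEq heqΦ.symm

end comp
noncomputable def spqK (q : ℝ) (g : ℝ → ℝ) (n : ℕ) (p : ℝ) : ℝ :=
  ∫ t in (0:ℝ)..g p, spqW q n p t

noncomputable def spqG1 (q : ℝ) (g : ℝ → ℝ) (p : ℝ) : ℝ :=
  -(1 / p ^ 2) * spqK q g 1 p * (1 - g p ^ q) ^ (1 / p)

noncomputable def spqE (q : ℝ) (g : ℝ → ℝ) (p : ℝ) : ℝ :=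
  q * g p ^ (q - 1) / (p * (1 - g p ^ q) ^ (1 - 1 / p)) * (spqK q g 1 p) ^ 2
    - 2 * Real.log (1 - g p ^ q) * spqK q g 1 p
    + (spqK q g 2 p - 2 * p * spqK q g 1 p)

section part5
variable {q y : ℝ} {g : ℝ → ℝ}

set_option maxRecDepth 8000 in
theorem spqG1_hasDerivAt (hq : 1 < q)
    (hg : ∀ p : ℝ, 1 < p → g p ∈ Set.Ioo (0:ℝ) 1 ∧
      (∫ t in (0:ℝ)..g p, (1 - t ^ q) ^ (-(1 / p))) = y)
    {p₀ : ℝ} (hp₀ : 1 < p₀) :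
    HasDerivAt (spqG1 q g) (-((1 - g p₀ ^ q) ^ (1 / p₀) / p₀ ^ 4) * spqE q g p₀) p₀ := by
  have hp₀0 : (0:ℝ) < p₀ := by linarith
  have hmem : ∀ p : ℝ, 1 < p → g p ∈ Set.Ioo (0:ℝ) 1 := fun p hp => (hg p hp).1
  set x := g p₀ with hxdef
  have hx : x ∈ Set.Ioo (0:ℝ) 1 := hmem p₀ hp₀
  have hu : 0 < 1 - x ^ q := spq_base_pos hq hx.1.le hx.2
  set u : ℝ := 1 - x ^ q with hudef
  set L : ℝ := Real.log u with hLdef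
  set v : ℝ := u ^ (1 / p₀) with hvdef
  set B : ℝ := u ^ (-(1 / p₀)) with hBdef
  have hvpos : 0 < v := Real.rpow_pos_of_pos hu _
  have hBv : B * v = 1 := by
    rw [hBdef, hvdef, ← Real.rpow_add hu]; simp
  set K₀ : ℝ := spqK q g 1 p₀ with hK₀def
  set J₀ : ℝ := spqK q g 2 p₀ with hJ₀def
  -- derivative of g
  have hg1 : HasDerivAt g (spqG1 q g p₀) p₀ := spq_g_hasDerivAt hq hg hp₀
  set g1 : ℝ := spqG1 q g p₀ with hg1def
  have hg1val : g1 = -(1 / p₀ ^ 2) * K₀ * v := rfl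
  -- derivative of K (n = 1)
  have hw1x : spqW q 1 p₀ x = L * B := by rw [spqW, pow_one, hLdef, hudef, hBdef]
  have hK : HasDerivAt (fun p => spqK q g 1 p) (J₀ / p₀ ^ 2 + L * B * g1) p₀ := by
    have := spq_comp_hasDerivAt hq hmem hp₀ hg1 1
    have hJint : (∫ t in (0:ℝ)..g p₀, spqW q 2 p₀ t / p₀ ^ 2) = J₀ / p₀ ^ 2 := by
      rw [intervalIntegral.integral_div]; rfl
    rw [hJint, hw1x] at this
    exact this
  -- derivative of a p = -(1/p^2)
  have ha : HasDerivAt (fun p : ℝ => -(1 / p ^ 2)) (2 / p₀ ^ 3) p₀ := by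
    have h1 : HasDerivAt (fun p : ℝ => p ^ 2) (2 * p₀) p₀ := by
      simpa using hasDerivAt_pow 2 p₀
    have h2 := (h1.inv (by positivity)).neg
    convert h2 using 1
    · rfl
    · rfl
    · funext p; simp
    · field_simp
  -- derivative of u p = 1 - g p ^ q
  set u' : ℝ := -(q * x ^ (q - 1) * g1) with hu'def
  have hup : HasDerivAt (fun p => 1 - g p ^ q) u' p₀ := by
    have hx0 : x ≠ 0 := hx.1.ne'
    have h1 : HasDerivAt (fun s : ℝ => s ^ q) (q * x ^ (q - 1)) x :=
      Real.hasDerivAt_rpow_const (Or.inl hx0)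
    have h2 : HasDerivAt (fun p => g p ^ q) (q * x ^ (q - 1) * g1) p₀ := h1.comp p₀ hg1
    simpa [hu'def] using h2.const_sub 1
  -- derivative of v p = (1 - g p ^ q) ^ (1/p)
  have hv : HasDerivAt (fun p => (1 - g p ^ q) ^ (1 / p))
      (v * (-(1 / p₀ ^ 2) * L + (1 / p₀) * (u' / u))) p₀ := by
    have hlogu : HasDerivAt (fun p => Real.log (1 - g p ^ q)) (u' / u) p₀ := by
      have := hup.log hu.ne'
      simpa [div_eq_mul_inv] using this
    have hinvp : HasDerivAt (fun p : ℝ => 1 / p) (-(1 / p₀ ^ 2)) p₀ := by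
      have := hasDerivAt_inv hp₀0.ne'
      simpa [one_div] using this
    have hprod : HasDerivAt (fun p => (1 / p) * Real.log (1 - g p ^ q))
        (-(1 / p₀ ^ 2) * Real.log (1 - x ^ q) + (1 / p₀) * (u' / u)) p₀ :=
      hinvp.mul hlogu
    have hexp := hprod.exp
    have hev : ∀ᶠ p in 𝓝 p₀, 0 < 1 - g p ^ q := by
      filter_upwards [isOpen_Ioi.mem_nhds hp₀] with p hp
      exact spq_base_pos hq (hmem p hp).1.le (hmem p hp).2
    have heq : (fun p => Real.exp ((1 / p) * Real.log (1 - g p ^ q))) =ᶠ[𝓝 p₀]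
        fun p => (1 - g p ^ q) ^ (1 / p) := by
      filter_upwards [hev] with p hp
      rw [Real.rpow_def_of_pos hp]; ring_nf
    have := hexp.congr_of_eventuallyEq heq.symm
    have hval : Real.exp ((1 / p₀) * Real.log (1 - x ^ q)) = v := by
      rw [hvdef, hudef, Real.rpow_def_of_pos hu]; ring_nf; rfl
    rw [hval] at this
    exact this
  -- product rule
  have hG1 : HasDerivAt (spqG1 q g)
      ((2 / p₀ ^ 3 * K₀ + -(1 / p₀ ^ 2) * (J₀ / p₀ ^ 2 + L * B * g1)) * v
        + -(1 / p₀ ^ 2) * K₀ * (v * (-(1 / p₀ ^ 2) * L + (1 / p₀) * (u' / u)))) p₀ := by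
    exact (ha.mul hK).mul hv
  -- algebra: identify the derivative value
  have hvu : v * u ^ (1 - 1 / p₀) = u := by
    rw [hvdef, ← Real.rpow_add hu]
    simp
  have hwpos : 0 < u ^ (1 - 1 / p₀) := Real.rpow_pos_of_pos hu _
  have halg : (2 / p₀ ^ 3 * K₀ + -(1 / p₀ ^ 2) * (J₀ / p₀ ^ 2 + L * B * g1)) * v
        + -(1 / p₀ ^ 2) * K₀ * (v * (-(1 / p₀ ^ 2) * L + (1 / p₀) * (u' / u)))
      = -(v / p₀ ^ 4) * (q * x ^ (q - 1) / (p₀ * u ^ (1 - 1 / p₀)) * K₀ ^ 2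
          - 2 * L * K₀ + (J₀ - 2 * p₀ * K₀)) := by
    rw [hu'def, hg1val]
    have hBval : B = 1 / v := by
      rw [eq_div_iff hvpos.ne']; exact hBv
    rw [hBval]
    have hw : u ^ (1 - 1 / p₀) = u / v := by
      rw [eq_div_iff hvpos.ne', mul_comm]; exact hvu
    rw [hw]
    field_simp
    ring
  rw [halg] at hG1
  have hEeq : -((1 - g p₀ ^ q) ^ (1 / p₀) / p₀ ^ 4) * spqE q g p₀
      = -(v / p₀ ^ 4) * (q * x ^ (q - 1) / (p₀ * u ^ (1 - 1 / p₀)) * K₀ ^ 2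
          - 2 * L * K₀ + (J₀ - 2 * p₀ * K₀)) := by
    rw [spqE, ← hxdef, ← hudef, ← hLdef, ← hK₀def, ← hJ₀def, ← hvdef]
  rw [hEeq]
  exact hG1

end part5
section final
variable {q y : ℝ} {g : ℝ → ℝ}

lemma spq_conv1 (hq : 1 < q) {p x : ℝ} (hp : 1 < p) (hx : x ∈ Set.Ioo (0:ℝ) 1) :
    (∫ t in (0:ℝ)..x, Real.log (1 - t ^ q) / (1 - t ^ q) ^ (1 / p))
      = ∫ t in (0:ℝ)..x, spqW q 1 p t := by
  apply intervalIntegral.integral_congr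
  intro t ht
  rw [Set.uIcc_of_le hx.1.le] at ht
  have hb : 0 < 1 - t ^ q := spq_base_pos hq ht.1 (lt_of_le_of_lt ht.2 hx.2)
  rw [spqW, pow_one, Real.rpow_neg hb.le]
  simp [div_eq_mul_inv]

lemma spq_conv2 (hq : 1 < q) {p x : ℝ} (hp : 1 < p) (hx : x ∈ Set.Ioo (0:ℝ) 1) :
    (∫ t in (0:ℝ)..x, Real.log (1 - t ^ q) * (Real.log (1 - t ^ q) - 2 * p) / (1 - t ^ q) ^ (1 / p))
      = (∫ t in (0:ℝ)..x, spqW q 2 p t) - 2 * p * ∫ t in (0:ℝ)..x, spqW q 1 p t := by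
  have hpne : p ≠ 0 := by linarith
  have h0c : (0:ℝ) ∈ Set.Icc (0:ℝ) x := ⟨le_refl 0, hx.1.le⟩
  have hxc : x ∈ Set.Icc (0:ℝ) x := ⟨hx.1.le, le_refl x⟩
  have hi1 : IntervalIntegrable (spqW q 1 p) volume 0 x :=
    spqW_intervalIntegrable hq 1 hpne h0c hxc hx.2
  have hi2 : IntervalIntegrable (spqW q 2 p) volume 0 x :=
    spqW_intervalIntegrable hq 2 hpne h0c hxc hx.2
  have hcongr : (∫ t in (0:ℝ)..x,
      Real.log (1 - t ^ q) * (Real.log (1 - t ^ q) - 2 * p) / (1 - t ^ q) ^ (1 / p))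
      = ∫ t in (0:ℝ)..x, (spqW q 2 p t - 2 * p * spqW q 1 p t) := by
    apply intervalIntegral.integral_congr
    intro t ht
    rw [Set.uIcc_of_le hx.1.le] at ht
    have hb : 0 < 1 - t ^ q := spq_base_pos hq ht.1 (lt_of_le_of_lt ht.2 hx.2)
    simp only [spqW]
    rw [Real.rpow_neg hb.le, div_eq_mul_inv]
    ring
  rw [hcongr, intervalIntegral.integral_sub hi2 (hi1.const_mul (2 * p)),
    intervalIntegral.integral_const_mul]

lemma spq_anti_deriv_nonpos {s : Set ℝ} (hs : IsOpen s) {φ : ℝ → ℝ} {p d : ℝ}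
    (hp : p ∈ s) (hanti : AntitoneOn φ s) (hd : HasDerivAt φ d p) : d ≤ 0 := by
  have hT : Tendsto (slope φ p) (𝓝[>] p) (𝓝 d) :=
    (hasDerivAt_iff_tendsto_slope.mp hd).mono_left
      (nhdsWithin_mono p (fun z hz => ne_of_gt hz))
  refine le_of_tendsto hT ?_
  have hsev : ∀ᶠ z in 𝓝[>] p, z ∈ s :=
    mem_nhdsWithin_of_mem_nhds (hs.mem_nhds hp)
  filter_upwards [hsev, self_mem_nhdsWithin] with z hz hz'
  have hz'' : p < z := hz'
  rw [slope_def_field]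
  apply div_nonpos_of_nonpos_of_nonneg
  · have := hanti hp hz hz''.le
    linarith
  · linarith

theorem sin_pq_concavity_criterion' (hq : 1 < q) (hy : 0 < y)
    (hg : ∀ p : ℝ, 1 < p → g p ∈ Set.Ioo (0:ℝ) 1 ∧
      (∫ t in (0:ℝ)..g p, (1 - t ^ q) ^ (-(1 / p))) = y) :
    ConcaveOn ℝ (Set.Ioi (1:ℝ)) g ↔
      ∀ p : ℝ, 1 < p →
        q * g p ^ (q - 1) / (p * (1 - g p ^ q) ^ (1 - 1 / p)) *
            (∫ t in (0:ℝ)..g p, Real.log (1 - t ^ q) / (1 - t ^ q) ^ (1 / p)) ^ 2 -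
          2 * Real.log (1 - g p ^ q) *
            (∫ t in (0:ℝ)..g p, Real.log (1 - t ^ q) / (1 - t ^ q) ^ (1 / p)) +
          (∫ t in (0:ℝ)..g p,
            Real.log (1 - t ^ q) * (Real.log (1 - t ^ q) - 2 * p) / (1 - t ^ q) ^ (1 / p))
          ≥ 0 := by
  have hgd : ∀ p : ℝ, 1 < p → HasDerivAt g (spqG1 q g p) p := by
    intro p hp
    exact spq_g_hasDerivAt hq hg hp
  have hderiv_eq : ∀ p : ℝ, 1 < p → deriv g p = spqG1 q g p := fun p hp => (hgd p hp).deriv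
  have hG2 : ∀ p : ℝ, 1 < p →
      HasDerivAt (deriv g) (-((1 - g p ^ q) ^ (1 / p) / p ^ 4) * spqE q g p) p := by
    intro p hp
    have heq : spqG1 q g =ᶠ[𝓝 p] deriv g := by
      filter_upwards [isOpen_Ioi.mem_nhds hp] with r hr
      exact (hderiv_eq r hr).symm
    exact (spqG1_hasDerivAt hq hg hp).congr_of_eventuallyEq heq.symm
  have hvpos : ∀ p : ℝ, 1 < p → 0 < (1 - g p ^ q) ^ (1 / p) / p ^ 4 := by
    intro p hp
    have hx := (hg p hp).1
    have hu : 0 < 1 - g p ^ q := spq_base_pos hq hx.1.le hx.2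
    positivity
  -- statement expression equals spqE
  have hstmt : ∀ p : ℝ, 1 < p →
      (q * g p ^ (q - 1) / (p * (1 - g p ^ q) ^ (1 - 1 / p)) *
            (∫ t in (0:ℝ)..g p, Real.log (1 - t ^ q) / (1 - t ^ q) ^ (1 / p)) ^ 2 -
          2 * Real.log (1 - g p ^ q) *
            (∫ t in (0:ℝ)..g p, Real.log (1 - t ^ q) / (1 - t ^ q) ^ (1 / p)) +
          (∫ t in (0:ℝ)..g p,
            Real.log (1 - t ^ q) * (Real.log (1 - t ^ q) - 2 * p) / (1 - t ^ q) ^ (1 / p)))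
        = spqE q g p := by
    intro p hp
    rw [spq_conv1 hq hp (hg p hp).1, spq_conv2 hq hp (hg p hp).1]
    rfl
  constructor
  · intro hconc p hp
    have hanti : AntitoneOn (deriv g) (Set.Ioi (1:ℝ)) :=
      hconc.antitoneOn_deriv (fun r hr => (hgd r hr).differentiableAt)
    have hle := spq_anti_deriv_nonpos isOpen_Ioi hp hanti (hG2 p hp)
    rw [hstmt p hp, ge_iff_le]
    nlinarith [hvpos p hp]
  · intro hE
    apply concaveOn_of_deriv2_nonpos (convex_Ioi 1)
    · intro p hp
      exact (hgd p hp).continuousAt.continuousWithinAt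
    · rw [interior_Ioi]
      intro p hp
      exact (hgd p hp).differentiableAt.differentiableWithinAt
    · rw [interior_Ioi]
      intro p hp
      exact (hG2 p hp).differentiableAt.differentiableWithinAt
    · rw [interior_Ioi]
      intro p hp
      have h1 : deriv (deriv g) p = -((1 - g p ^ q) ^ (1 / p) / p ^ 4) * spqE q g p :=
        (hG2 p hp).deriv
      have h2 := hE p hp
      rw [hstmt p hp] at h2
      simp only [Function.iterate_succ, Function.iterate_zero, Function.comp_apply, id_eq]
      rw [h1]
      nlinarith [hvpos p hp]
end final

theorem sin_pq_concavity_criterion (q y : ℝ) (hq : 1 < q) (hy : 0 < y) (g : ℝ → ℝ)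
    (hg : ∀ p : ℝ, 1 < p → g p ∈ Set.Ioo (0:ℝ) 1 ∧
      (∫ t in (0:ℝ)..g p, (1 - t ^ q) ^ (-(1 / p))) = y) :
    ConcaveOn ℝ (Set.Ioi (1:ℝ)) g ↔
      ∀ p : ℝ, 1 < p →
        q * g p ^ (q - 1) / (p * (1 - g p ^ q) ^ (1 - 1 / p)) *
            (∫ t in (0:ℝ)..g p, Real.log (1 - t ^ q) / (1 - t ^ q) ^ (1 / p)) ^ 2 -
          2 * Real.log (1 - g p ^ q) *
            (∫ t in (0:ℝ)..g p, Real.log (1 - t ^ q) / (1 - t ^ q) ^ (1 / p)) +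
          (∫ t in (0:ℝ)..g p,
            Real.log (1 - t ^ q) * (Real.log (1 - t ^ q) - 2 * p) / (1 - t ^ q) ^ (1 / p))
          ≥ 0 :=
  sin_pq_concavity_criterion' hq hy hg
end
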